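/- arXiv:2101.07126 — 5 statements merged into one kernel-verified Lean document; each statement's English description precedes it below -/
import Mathlib

section
/- For every natural number m ≥ 1 there exists a ReLU MLP of depth m+1 and width 4 (i.e., m+1 hidden layers, each of width at most 4) whose output F satisfies F(x) > 0 if and only if x lies in the interior of P_m. -/
open Real

/-- Componentwise ReLU. -/
noncomputable def relu {n : ℕ} (z : Fin n → ℝ) : Fin n → ℝ := fun j => max (z j) 0

/-- Hidden layers of a ReLU MLP on `ℝ²`: `mlpHidden A1 b1 A b i` is the
`(i+1)`-st hidden layer `h_{i+1}`. -/
noncomputable def mlpHidden {w : ℕ} (A1 : Matrix (Fin w) (Fin 2) ℝ) (b1 : Fin w → ℝ)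
    (A : ℕ → Matrix (Fin w) (Fin w) ℝ) (b : ℕ → Fin w → ℝ) :
    ℕ → (Fin 2 → ℝ) → (Fin w → ℝ)
  | 0, x => relu (A1.mulVec x + b1)
  | (i + 1), x => relu ((A i).mulVec (mlpHidden A1 b1 A b i x) + b i)

/-- `F : ℝ² → ℝ` is computed by a ReLU MLP with `d` hidden layers, each of width `w`. -/
def IsReluMLP (d w : ℕ) (F : (Fin 2 → ℝ) → ℝ) : Prop :=
  ∃ (A1 : Matrix (Fin w) (Fin 2) ℝ) (b1 : Fin w → ℝ)
    (A : ℕ → Matrix (Fin w) (Fin w) ℝ) (b : ℕ → Fin w → ℝ)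
    (v : Fin w → ℝ) (c : ℝ),
    ∀ x, F x = (∑ j, v j * mlpHidden A1 b1 A b (d - 1) x j) + c

/-- Outward unit normal of the `k`-th edge of the regular polygon `P m`. -/
noncomputable def polyNormal (m k : ℕ) : Fin 2 → ℝ :=
  ![Real.cos (π / 2 + (2 * (k : ℝ) + 1) * π / (2 : ℝ) ^ (m + 1)),
    Real.sin (π / 2 + (2 * (k : ℝ) + 1) * π / (2 : ℝ) ^ (m + 1))]

/-- The regular polygon `P m` with `2^(m+1)` vertices inscribed in the unit circle
with a vertex at `(0,1)`. -/
noncomputable def P (m : ℕ) : Set (Fin 2 → ℝ) :=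
  {x | ∀ k < 2 ^ (m + 1),
    x 0 * polyNormal m k 0 + x 1 * polyNormal m k 1 ≤ Real.cos (π / (2 : ℝ) ^ (m + 1))}

/-!
Write `h_φ x = -x₀ sin φ + x₁ cos φ` for the height of `x` in the direction at angle `φ` from
the vertical, and `α = π / 2^(m+1)`. The interior of `P m` is cut out by the `2^m` symmetric
pairs of constraints `h_{±(2i+1)α} x < cos α`. The fold `x ↦ (-|x₀|, x₁)` merges each pair `±φ`
with `0 ≤ φ ≤ π` into the single constraint at `φ`, and a clockwise rotation by half the
remaining fan re-centres it on the vertical, so one fold-and-rotate halves the number of pairs.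
After `m` steps one pair is left, and one more fold leaves a single linear constraint. Every
step is linear in `(x₀⁺, x₀⁻, x₁⁺, x₁⁻)`, which one width-4 ReLU layer recomputes.
-/

open Matrix

noncomputable def tiltedHeight (φ : ℝ) : (Fin 2 → ℝ) →L[ℝ] ℝ :=
  -Real.sin φ • ContinuousLinearMap.proj 0 + Real.cos φ • ContinuousLinearMap.proj 1

@[simp]
lemma tiltedHeight_apply (φ : ℝ) (y : Fin 2 → ℝ) :
    tiltedHeight φ y = -y 0 * Real.sin φ + y 1 * Real.cos φ := by
  simp only [tiltedHeight, _root_.add_apply, _root_.smul_apply,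
    ContinuousLinearMap.proj_apply, smul_eq_mul]
  ring

lemma interior_setOf_le_of_ne_zero {E : Type*} [NormedAddCommGroup E] [NormedSpace ℝ E]
    [CompleteSpace E] {f : E →L[ℝ] ℝ} (hf : f ≠ 0) (c : ℝ) :
    interior {x | f x ≤ c} = {x | f x < c} := by
  have hsurj : Function.Surjective f :=
    LinearMap.surjective (f := (f : E →ₗ[ℝ] ℝ)) (ContinuousLinearMap.coe_injective.ne hf)
  exact (f.interior_preimage hsurj (Set.Iic c)).trans (congrArg _ interior_Iic)

lemma tiltedHeight_ne_zero (φ : ℝ) : tiltedHeight φ ≠ 0 := by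
  have h : tiltedHeight φ ![-Real.sin φ, Real.cos φ] = 1 := by
    simp only [tiltedHeight_apply, cons_val_zero, cons_val_one]
    linear_combination Real.sin_sq_add_cos_sq φ
  exact fun h0 => by simp [h0] at h

lemma polyNormal_inner (m k : ℕ) (x : Fin 2 → ℝ) :
    x 0 * polyNormal m k 0 + x 1 * polyNormal m k 1
      = tiltedHeight ((2 * k + 1) * (π / 2 ^ (m + 1))) x := by
  simp only [polyNormal, Matrix.cons_val_zero, Matrix.cons_val_one, tiltedHeight_apply,
    add_comm (π / 2), Real.cos_add_pi_div_two, Real.sin_add_pi_div_two, mul_div_assoc]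
  ring

lemma interior_P (m : ℕ) : interior (P m) =
    {x | ∀ k : ℕ, k < 2 ^ (m + 1) → tiltedHeight ((2 * k + 1) * (π / 2 ^ (m + 1))) x
      < Real.cos (π / 2 ^ (m + 1))} := by
  have hP : P m = ⋂ (k : ℕ) (_ : k < 2 ^ (m + 1)),
      {x | tiltedHeight ((2 * k + 1) * (π / 2 ^ (m + 1))) x ≤ Real.cos (π / 2 ^ (m + 1))} := by
    ext x
    simp only [P, polyNormal_inner, Set.mem_ofPred_eq, Set.mem_iInter]
  rw [hP, interior_iInter₂_lt_nat]
  simp only [interior_setOf_le_of_ne_zero (tiltedHeight_ne_zero _)]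
  ext x
  simp

def InFan (α t : ℝ) (n : ℕ) (y : Fin 2 → ℝ) : Prop :=
  ∀ i : ℕ, i < n →
    tiltedHeight ((2 * i + 1) * α) y < t ∧ tiltedHeight (-((2 * i + 1) * α)) y < t

lemma forall_lt_two_mul_iff_ends {p : ℕ → Prop} {n : ℕ} :
    (∀ k < 2 * n, p k) ↔ ∀ i < n, p i ∧ p (2 * n - 1 - i) := by
  refine ⟨fun h i hi => ⟨h i (by omega), h _ (by omega)⟩, fun h k hk => ?_⟩
  rcases lt_or_ge k n with hkn | hkn
  · exact (h k hkn).1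
  · simpa [show 2 * n - 1 - (2 * n - 1 - k) = k by omega] using (h (2 * n - 1 - k) (by omega)).2

lemma forall_lt_two_mul_iff_middle {p : ℕ → Prop} {n : ℕ} :
    (∀ k < 2 * n, p k) ↔ ∀ i < n, p (n + i) ∧ p (n - 1 - i) := by
  refine ⟨fun h i hi => ⟨h _ (by omega), h _ (by omega)⟩, fun h k hk => ?_⟩
  rcases lt_or_ge k n with hkn | hkn
  · simpa [show n - 1 - (n - 1 - k) = k by omega] using (h (n - 1 - k) (by omega)).2
  · simpa [show n + (k - n) = k by omega] using (h (k - n) (by omega)).1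

lemma forall_lt_two_mul_iff_inFan {α t : ℝ} {n : ℕ} (hα : 2 * n * α = π) (y : Fin 2 → ℝ) :
    (∀ k : ℕ, k < 2 * n → tiltedHeight ((2 * k + 1) * α) y < t) ↔ InFan α t n y := by
  rw [forall_lt_two_mul_iff_ends]
  refine forall₂_congr fun i hi => and_congr_right' ?_
  have hangle : (2 * ((2 * n - 1 - i : ℕ) : ℝ) + 1) * α = -((2 * i + 1) * α) + 2 * π := by
    rw [Nat.sub_sub, Nat.cast_sub (by omega), ← hα]
    push_cast
    ring
  simp only [hangle, tiltedHeight_apply, Real.sin_add_two_pi, Real.cos_add_two_pi]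

noncomputable def foldLeft (y : Fin 2 → ℝ) : Fin 2 → ℝ := ![-|y 0|, y 1]

lemma tiltedHeight_foldLeft {φ : ℝ} (hφ : 0 ≤ Real.sin φ) (y : Fin 2 → ℝ) :
    tiltedHeight φ (foldLeft y) = max (tiltedHeight φ y) (tiltedHeight (-φ) y) := by
  simp only [foldLeft, tiltedHeight_apply, Matrix.cons_val_zero, Matrix.cons_val_one,
    Real.sin_neg, Real.cos_neg, neg_neg, abs_eq_max_neg, max_mul_of_nonneg _ _ hφ,
    max_add_add_right, neg_mul_neg, max_comm]

lemma inFan_iff_forall_foldLeft {α t : ℝ} {n : ℕ} (hα : 0 ≤ α) (hn : 2 * n * α ≤ π)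
    (y : Fin 2 → ℝ) :
    InFan α t n y ↔ ∀ k : ℕ, k < n → tiltedHeight ((2 * k + 1) * α) (foldLeft y) < t := by
  refine forall₂_congr fun k hk => ?_
  have hk' : (2 * k + 1 : ℝ) ≤ 2 * n := by exact_mod_cast (by omega : 2 * k + 1 ≤ 2 * n)
  rw [tiltedHeight_foldLeft (Real.sin_nonneg_of_nonneg_of_le_pi (by positivity) (by nlinarith)),
    max_lt_iff]

noncomputable def rotate (θ : ℝ) (y : Fin 2 → ℝ) : Fin 2 → ℝ :=
  ![y 0 * Real.cos θ - y 1 * Real.sin θ, y 0 * Real.sin θ + y 1 * Real.cos θ]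

lemma tiltedHeight_rotate (φ θ : ℝ) (y : Fin 2 → ℝ) :
    tiltedHeight φ (rotate θ y) = tiltedHeight (φ - θ) y := by
  simp only [rotate, tiltedHeight_apply, Matrix.cons_val_zero, Matrix.cons_val_one,
    Real.sin_sub, Real.cos_sub]
  ring

lemma inFan_rotate_foldLeft_iff {α t : ℝ} {n : ℕ} (hα : 0 ≤ α) (hn : 4 * n * α ≤ π)
    (y : Fin 2 → ℝ) :
    InFan α t n (rotate (-(2 * n * α)) (foldLeft y)) ↔ InFan α t (2 * n) y := by
  rw [inFan_iff_forall_foldLeft (n := 2 * n) hα (by push_cast; linarith),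
    forall_lt_two_mul_iff_middle]
  unfold InFan
  refine forall₂_congr fun i hi => ?_
  have hup : (2 * i + 1) * α - -(2 * n * α) = (2 * ((n + i : ℕ) : ℝ) + 1) * α := by
    push_cast; ring
  have hdown : -((2 * i + 1) * α) - -(2 * n * α) = (2 * ((n - 1 - i : ℕ) : ℝ) + 1) * α := by
    rw [Nat.sub_sub, Nat.cast_sub (by omega)]
    push_cast
    ring
  rw [tiltedHeight_rotate, tiltedHeight_rotate, hup, hdown]

noncomputable def foldIter : ℕ → (Fin 2 → ℝ) → Fin 2 → ℝ
  | 0, y => y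
  | j + 1, y => rotate (-(π / 2 ^ (j + 1))) (foldLeft (foldIter j y))

lemma inFan_foldIter_iff (t : ℝ) (y : Fin 2 → ℝ) (j n : ℕ) :
    InFan (π / 2 ^ (j + n + 1)) t (2 ^ n) (foldIter j y)
      ↔ InFan (π / 2 ^ (j + n + 1)) t (2 ^ (j + n)) y := by
  induction j generalizing n with
  | zero => simp [foldIter]
  | succ j ih =>
    have hθ : π / 2 ^ (j + 1) = 2 * ((2 ^ n : ℕ) : ℝ) * (π / 2 ^ (j + 1 + n + 1)) := by
      push_cast
      field_simp
      ring
    have hbound : 4 * ((2 ^ n : ℕ) : ℝ) * (π / 2 ^ (j + 1 + n + 1)) ≤ π := by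
      have h : 4 * ((2 ^ n : ℕ) : ℝ) * (π / 2 ^ (j + 1 + n + 1)) = π / 2 ^ j := by
        push_cast
        field_simp
        ring
      rw [h]
      exact div_le_self Real.pi_pos.le (one_le_pow₀ one_le_two)
    rw [foldIter, hθ, inFan_rotate_foldLeft_iff (by positivity) hbound, ← pow_succ',
      show j + 1 + n + 1 = j + (n + 1) + 1 by ring, ih, show j + (n + 1) = j + 1 + n by ring]

noncomputable def posNegParts (y : Fin 2 → ℝ) : Fin 4 → ℝ := relu ![y 0, -y 0, y 1, -y 1]

def splitRows {k : ℕ} (L : Matrix (Fin 2) (Fin k) ℝ) : Matrix (Fin 4) (Fin k) ℝ :=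
  Matrix.of ![L 0, -L 0, L 1, -L 1]

lemma relu_splitRows_mulVec {k : ℕ} (L : Matrix (Fin 2) (Fin k) ℝ) (z : Fin k → ℝ) :
    relu (splitRows L *ᵥ z) = posNegParts (L *ᵥ z) := by
  ext i
  fin_cases i <;> simp [splitRows, posNegParts, Matrix.mulVec]

def absCoeffs (p q : ℝ) : Fin 4 → ℝ := ![p, p, q, -q]

lemma absCoeffs_dotProduct_posNegParts (p q : ℝ) (y : Fin 2 → ℝ) :
    absCoeffs p q ⬝ᵥ posNegParts y = p * |y 0| + q * y 1 := by
  simp only [absCoeffs, posNegParts, relu, dotProduct, Fin.sum_univ_four, cons_val_zero,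
    cons_val_one, cons_val, neg_mul]
  linear_combination p * max_zero_add_max_neg_zero_eq_abs_self (y 0)
    + q * max_zero_sub_max_neg_zero_eq_self (y 1)

noncomputable def foldRotateMatrix (θ : ℝ) : Matrix (Fin 2) (Fin 4) ℝ :=
  Matrix.of ![absCoeffs (-Real.cos θ) (Real.sin θ), absCoeffs (Real.sin θ) (Real.cos θ)]

lemma foldRotateMatrix_mulVec_posNegParts (θ : ℝ) (y : Fin 2 → ℝ) :
    foldRotateMatrix θ *ᵥ posNegParts y = rotate (-θ) (foldLeft y) := by
  ext i
  fin_cases i <;>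
    simp [foldRotateMatrix, Matrix.mulVec, absCoeffs_dotProduct_posNegParts, rotate, foldLeft] <;>
    ring

lemma mlpHidden_foldIter (j : ℕ) (x : Fin 2 → ℝ) :
    mlpHidden (splitRows 1) 0 (fun i => splitRows (foldRotateMatrix (π / 2 ^ (i + 1)))) 0 j x
      = posNegParts (foldIter j x) := by
  induction j with
  | zero => simp [mlpHidden, relu_splitRows_mulVec, foldIter]
  | succ j ih =>
    simp [mlpHidden, ih, relu_splitRows_mulVec, foldRotateMatrix_mulVec_posNegParts, foldIter]

lemma isReluMLP_foldIter (m : ℕ) (α t : ℝ) :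
    IsReluMLP (m + 1) 4 (fun x => t - tiltedHeight α (foldLeft (foldIter m x))) := by
  refine ⟨splitRows 1, 0, fun i => splitRows (foldRotateMatrix (π / 2 ^ (i + 1))), 0,
    absCoeffs (-Real.sin α) (-Real.cos α), t, fun x => ?_⟩
  have h := absCoeffs_dotProduct_posNegParts (-Real.sin α) (-Real.cos α) (foldIter m x)
  rw [dotProduct] at h
  rw [Nat.add_sub_cancel, mlpHidden_foldIter, h]
  simp only [foldLeft, tiltedHeight_apply, cons_val_zero, cons_val_one, neg_neg]
  ring

theorem efficient_deep_solution_exists_general (m : ℕ) :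
    ∃ F : (Fin 2 → ℝ) → ℝ, IsReluMLP (m + 1) 4 F ∧
      ∀ x, 0 < F x ↔ x ∈ interior (P m) := by
  set α := π / 2 ^ (m + 1)
  have hα_le : 2 * ((1 : ℕ) : ℝ) * α ≤ π := by
    have : 2 * ((1 : ℕ) : ℝ) * α = π / 2 ^ m := by
      simp only [α, Nat.cast_one]
      field_simp
      ring
    exact this ▸ div_le_self Real.pi_pos.le (one_le_pow₀ one_le_two)
  have hα_eq : 2 * ((2 ^ m : ℕ) : ℝ) * α = π := by
    simp only [α, Nat.cast_pow, Nat.cast_ofNat]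
    field_simp
    ring
  refine ⟨_, isReluMLP_foldIter m α (Real.cos α), fun x => ?_⟩
  have hfold := inFan_foldIter_iff (Real.cos α) x m 0
  rw [add_zero, pow_zero, inFan_iff_forall_foldLeft (by positivity) hα_le] at hfold
  rw [sub_pos, interior_P, Set.mem_ofPred_eq, pow_succ', forall_lt_two_mul_iff_inFan hα_eq,
    ← hfold]
  simp

/-- There is a ReLU MLP of depth `m+1` and width `4` whose output is positive
exactly on the interior of `P m`. -/
theorem efficient_deep_solution_exists (m : ℕ) (hm : 1 ≤ m) :
    ∃ F : (Fin 2 → ℝ) → ℝ, IsReluMLP (m + 1) 4 F ∧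
      ∀ x, 0 < F x ↔ x ∈ interior (P m) :=
  efficient_deep_solution_exists_general m
end

section
/- Let m ≥ 1 and let F : ℝ² → ℝ be piecewise affine with N pieces. If F correctly classifies f_m, then N ≥ 2^m. -/
open Real

/-- `F` correctly classifies `f_m`: positive on the interior of `P m`,
nonpositive outside `P m`. -/
def CorrectlyClassifies (m : ℕ) (F : (Fin 2 → ℝ) → ℝ) : Prop :=
  (∀ x ∈ interior (P m), 0 < F x) ∧ ∀ x ∉ P m, F x ≤ 0

/-!
Put a point `r • u k` just beyond each of the `2^(m+1)` edges, with `cos (π / 2^(m+1)) < r < 1`.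
These points lie outside `P m`, so `F ≤ 0` at each of them, while the midpoint of any two lies
in the interior, because `⟪(u k + u l) / 2, u j⟫ ≤ |cos ((k - l) π / 2^(m+1))| ≤ cos (π / 2^(m+1))`.
Two of the points in one convex piece would force `F ≤ 0` at their midpoint, as `F` is affine
there; so distinct points lie in distinct pieces, and `N ≥ 2^(m+1)`.
-/

section PiecewiseAffine

variable {E : Type*} [AddCommGroup E] [Module ℝ E]

lemma nonpos_midpoint_of_eqOn_affineMap {s : Set E} {F : E → ℝ} {g : E →ᵃ[ℝ] ℝ}
    (hs : Convex ℝ s) (hF : ∀ x ∈ s, F x = g x) {x y : E} (hx : x ∈ s) (hy : y ∈ s)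
    (hFx : F x ≤ 0) (hFy : F y ≤ 0) : F (midpoint ℝ x y) ≤ 0 := by
  rw [hF _ (hs.midpoint_mem hx hy), AffineMap.map_midpoint, ← midpoint_self ℝ (0 : ℝ)]
  exact midpoint_le_midpoint (hF x hx ▸ hFx) (hF y hy ▸ hFy)

lemma card_le_card_of_pairwise_pos_midpoint {ι κ : Type*} [Fintype ι] [Fintype κ]
    {F : E → ℝ} {C : κ → Set E} {g : κ → E →ᵃ[ℝ] ℝ} (hconv : ∀ i, Convex ℝ (C i))
    (hcover : ⋃ i, C i = Set.univ) (hagree : ∀ i, ∀ x ∈ C i, F x = g i x)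
    {b : ι → E} (hb : ∀ k, F (b k) ≤ 0)
    (hmid : Pairwise fun k l ↦ 0 < F (midpoint ℝ (b k) (b l))) :
    Fintype.card ι ≤ Fintype.card κ := by
  have hmem : ∀ k, ∃ i, b k ∈ C i := fun k ↦ Set.mem_iUnion.mp (hcover ▸ Set.mem_univ _)
  choose piece hpiece using hmem
  refine Fintype.card_le_of_injective piece fun k l hkl ↦ by_contra fun hne ↦ ?_
  refine (hmid hne).not_ge (nonpos_midpoint_of_eqOn_affineMap (hconv (piece k)) (hagree _)
    (hpiece k) ?_ (hb k) (hb l))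
  exact hkl ▸ hpiece l

end PiecewiseAffine

lemma abs_cos_int_mul_le {n : ℕ} {d : ℤ} (hd : d ≠ 0) (hdn : |d| < n) :
    |cos (d * (π / n))| ≤ cos (π / n) := by
  have hn : (0 : ℝ) < n := by exact_mod_cast (abs_nonneg d).trans_lt hdn
  have hα : 0 < π / n := by positivity
  have hd1 : (1 : ℝ) ≤ |(d : ℝ)| := by exact_mod_cast Int.one_le_abs hd
  have hdn' : |(d : ℝ)| ≤ n - 1 := by
    have : |d| ≤ n - 1 := by omega
    exact_mod_cast this
  have hlow : π / n ≤ |d * (π / n)| := by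
    rw [abs_mul, abs_of_pos hα]; nlinarith
  have hhigh : |d * (π / n)| ≤ π - π / n := by
    rw [abs_mul, abs_of_pos hα]
    calc |(d : ℝ)| * (π / n) ≤ (n - 1) * (π / n) := by gcongr
      _ = π - π / n := by field_simp
  rw [← cos_abs (d * (π / n)), abs_le]
  constructor
  · rw [← cos_pi_sub]
    exact cos_le_cos_of_nonneg_of_le_pi (abs_nonneg _) (by linarith) hhigh
  · exact cos_le_cos_of_nonneg_of_le_pi hα.le (by linarith) hlow

lemma cos_pi_div_pos {x : ℝ} (hx : 2 < x) : 0 < cos (π / x) := by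
  have hπx : 0 < π / x := div_pos pi_pos (by linarith)
  refine cos_pos_of_mem_Ioo ⟨by linarith [pi_pos], ?_⟩
  rw [div_lt_div_iff_of_pos_left pi_pos (by linarith) two_pos]
  exact hx

lemma cos_pi_div_lt_one {x : ℝ} (hx : 1 ≤ x) : cos (π / x) < 1 := by
  have := cos_lt_cos_of_nonneg_of_le_pi le_rfl (div_le_self pi_pos.le hx)
    (div_pos pi_pos (by linarith))
  rwa [cos_zero] at this

lemma cos_add_cos_le_two_mul_abs_cos (a b : ℝ) : cos a + cos b ≤ 2 * |cos ((a - b) / 2)| := by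
  rw [cos_add_cos, mul_assoc]
  gcongr
  calc cos ((a + b) / 2) * cos ((a - b) / 2) ≤ |cos ((a + b) / 2) * cos ((a - b) / 2)| :=
        le_abs_self _
    _ ≤ |cos ((a - b) / 2)| := by
      rw [abs_mul]; exact mul_le_of_le_one_left (abs_nonneg _) (abs_cos_le_one _)

section Polygon

variable {m : ℕ}

lemma mem_P_iff {x : Fin 2 → ℝ} :
    x ∈ P m ↔ ∀ k < 2 ^ (m + 1), x ⬝ᵥ polyNormal m k ≤ cos (π / (2 : ℝ) ^ (m + 1)) := by
  simp only [P, dotProduct, Fin.sum_univ_two, Set.mem_ofPred_eq]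

lemma mem_interior_P_of_lt {x : Fin 2 → ℝ}
    (hx : ∀ k < 2 ^ (m + 1), x ⬝ᵥ polyNormal m k < cos (π / (2 : ℝ) ^ (m + 1))) :
    x ∈ interior (P m) := by
  set U := ⋂ k ∈ {k | k < 2 ^ (m + 1)},
    {y : Fin 2 → ℝ | y ⬝ᵥ polyNormal m k < cos (π / (2 : ℝ) ^ (m + 1))}
  have hU : IsOpen U := (Set.finite_lt_nat _).isOpen_biInter fun k _ ↦
    isOpen_lt (continuous_id.dotProduct continuous_const) continuous_const
  refine interior_maximal (fun y hy ↦ mem_P_iff.mpr fun k hk ↦ ?_) hU (Set.mem_iInter₂.mpr hx)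
  exact (Set.mem_iInter₂.mp hy k hk).le

lemma polyNormal_dotProduct (k j : ℕ) :
    polyNormal m k ⬝ᵥ polyNormal m j = cos (2 * ((k : ℤ) - j : ℤ) * (π / (2 : ℝ) ^ (m + 1))) := by
  rw [show (2 * ((k : ℤ) - j : ℤ) * (π / (2 : ℝ) ^ (m + 1)) : ℝ)
      = (π / 2 + (2 * k + 1) * π / 2 ^ (m + 1)) - (π / 2 + (2 * j + 1) * π / 2 ^ (m + 1)) by
    push_cast; ring, cos_sub]
  simp [polyNormal, dotProduct, Fin.sum_univ_two]

lemma smul_polyNormal_notMem_P {k : ℕ} (hk : k < 2 ^ (m + 1)) {r : ℝ}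
    (hr : cos (π / (2 : ℝ) ^ (m + 1)) < r) : r • polyNormal m k ∉ P m := fun h ↦ by
  have := mem_P_iff.mp h k hk
  simp only [smul_dotProduct, polyNormal_dotProduct, sub_self, Int.cast_zero, mul_zero, zero_mul,
    cos_zero, smul_eq_mul, mul_one] at this
  linarith

lemma midpoint_smul_polyNormal_mem_interior_P (hm : 1 ≤ m) {k l : ℕ} (hk : k < 2 ^ (m + 1))
    (hl : l < 2 ^ (m + 1)) (hkl : k ≠ l) {r : ℝ} (hr : cos (π / (2 : ℝ) ^ (m + 1)) < r)
    (hr₁ : r < 1) :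
    midpoint ℝ (r • polyNormal m k) (r • polyNormal m l) ∈ interior (P m) := by
  set α := π / (2 : ℝ) ^ (m + 1)
  have hα : 0 < cos α := cos_pi_div_pos (lt_self_pow₀ one_lt_two (by omega))
  have hcos_diff : |cos (((k : ℤ) - l : ℤ) * α)| ≤ cos α := by
    have := abs_cos_int_mul_le (n := 2 ^ (m + 1)) (d := (k : ℤ) - l) (by omega) (by
      rw [abs_lt]; constructor <;> omega)
    simpa [α] using this
  refine mem_interior_P_of_lt fun j _ ↦ ?_
  rw [midpoint_eq_smul_add, smul_dotProduct, add_dotProduct, smul_dotProduct, smul_dotProduct,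
    polyNormal_dotProduct, polyNormal_dotProduct, smul_eq_mul, smul_eq_mul, smul_eq_mul,
    ← mul_add, invOf_eq_inv]
  have hsum := cos_add_cos_le_two_mul_abs_cos (2 * ((k : ℤ) - j : ℤ) * α)
    (2 * ((l : ℤ) - j : ℤ) * α)
  rw [show (2 * ((k : ℤ) - j : ℤ) * α - 2 * ((l : ℤ) - j : ℤ) * α) / 2
      = ((k : ℤ) - l : ℤ) * α by push_cast; ring] at hsum
  calc 2⁻¹ * (r * (cos (2 * ((k : ℤ) - j : ℤ) * α) + cos (2 * ((l : ℤ) - j : ℤ) * α)))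
      ≤ 2⁻¹ * (r * (2 * cos α)) :=
      mul_le_mul_of_nonneg_left (mul_le_mul_of_nonneg_left (by linarith) (by linarith))
        (by norm_num)
    _ < cos α := by nlinarith

end Polygon

/-- A piecewise affine function with `N` pieces correctly classifying `f_m`
needs at least `2^m` pieces. -/
theorem pieces_lower_bound (m N : ℕ) (hm : 1 ≤ m) (F : (Fin 2 → ℝ) → ℝ)
    (C : Fin N → Set (Fin 2 → ℝ)) (g : Fin N → ((Fin 2 → ℝ) →ᵃ[ℝ] ℝ))
    (hconv : ∀ i, Convex ℝ (C i)) (hcover : (⋃ i, C i) = Set.univ)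
    (hagree : ∀ i, ∀ x ∈ C i, F x = g i x)
    (hcls : CorrectlyClassifies m F) :
    2 ^ m ≤ N := by
  have hcos_lt : cos (π / (2 : ℝ) ^ (m + 1)) < 1 := cos_pi_div_lt_one (one_le_pow₀ one_le_two)
  obtain ⟨r, hr, hr₁⟩ := exists_between hcos_lt
  have hcard := card_le_card_of_pairwise_pos_midpoint hconv hcover hagree
    (b := fun k : Fin (2 ^ (m + 1)) ↦ r • polyNormal m k)
    (fun k ↦ hcls.2 _ (smul_polyNormal_notMem_P k.isLt hr))
    (fun k l hkl ↦ hcls.1 _ (midpoint_smul_polyNormal_mem_interior_P hm k.isLt l.isLt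
      (Fin.val_injective.ne hkl) hr hr₁))
  rw [Fintype.card_fin, Fintype.card_fin] at hcard
  exact (Nat.pow_le_pow_right two_pos m.le_succ).trans hcard
end

section
/- Every ReLU MLP of depth d ≥ 1 and width w ≥ 2 on ℝ² is piecewise affine with at most w^(2d) pieces: there exist at most w^(2d) convex sets covering ℝ² such that the network output F agrees with an affine map on each of them. -/
open Real

/-!
On a convex piece where the previous layer is affine, the next layer applies ReLU to `w` affine
functions on the plane, and ReLU is affine on each of their sign cells. The sign patterns that
`m` affine functions on an `n`-dimensional space realize form a set family of VC-dimension at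
most `n`, so by the Sauer–Shelah lemma there are at most `∑_{k ≤ n} (m choose k)` of them; for
`n = 2` and `m = w ≥ 2` this is at most `w²`. Each layer therefore multiplies the number of convex
pieces by at most `w²`.
-/

open Finset Module Matrix

lemma sum_mul_sub_pos {ι : Type*} {s : Finset ι} {μ a b : ι → ℝ} (hμ : ∃ k ∈ s, μ k ≠ 0)
    (ha : ∀ k ∈ s, 0 < a k ↔ 0 < μ k) (hb : ∀ k ∈ s, 0 < b k ↔ μ k < 0) :
    0 < ∑ k ∈ s, μ k * (a k - b k) := by
  have hterm : ∀ k ∈ s, μ k ≠ 0 → 0 < μ k * (a k - b k) := by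
    intro k hk hk0
    rcases hk0.lt_or_gt with hneg | hpos
    · have : a k ≤ 0 := not_lt.1 fun h => (lt_asymm hneg ((ha k hk).1 h))
      nlinarith [(hb k hk).2 hneg]
    · have : b k ≤ 0 := not_lt.1 fun h => (lt_asymm hpos ((hb k hk).1 h))
      nlinarith [(ha k hk).2 hpos]
  obtain ⟨k₀, hk₀, hμk₀⟩ := hμ
  refine sum_pos' (fun k hk => ?_) ⟨k₀, hk₀, hterm k₀ hk₀ hμk₀⟩
  by_cases hk0 : μ k = 0
  · simp [hk0]
  · exact (hterm k hk hk0).le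

section SignPattern

variable {V : Type*} [AddCommGroup V] [Module ℝ V] {ι : Type*}

section Patterns

variable [Fintype ι]

noncomputable def signPattern (h : ι → V →ᵃ[ℝ] ℝ) (x : V) : Finset ι := {k | 0 < h k x}

noncomputable def signPatterns (h : ι → V →ᵃ[ℝ] ℝ) : Finset (Finset ι) :=
  (Set.range (signPattern h)).toFinite.toFinset

lemma signPattern_mem_signPatterns (h : ι → V →ᵃ[ℝ] ℝ) (x : V) :
    signPattern h x ∈ signPatterns h := by
  simp [signPatterns]

end Patterns

variable [DecidableEq ι]

def signCell (h : ι → V →ᵃ[ℝ] ℝ) (U : Finset ι) : Set V :=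
  ⋂ k, h k ⁻¹' (if k ∈ U then Set.Ici 0 else Set.Iic 0)

variable (h : ι → V →ᵃ[ℝ] ℝ)

lemma convex_signCell (U : Finset ι) : Convex ℝ (signCell h U) :=
  convex_iInter fun k => by
    split_ifs
    exacts [(convex_Ici 0).affine_preimage _, (convex_Iic 0).affine_preimage _]

variable [Fintype ι]

lemma mem_signCell_signPattern (x : V) : x ∈ signCell h (signPattern h x) := by
  refine Set.mem_iInter.2 fun k => ?_
  by_cases hk : 0 < h k x
  · simpa [signPattern, hk] using hk.le
  · simp [signPattern, hk, not_lt.1 hk]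

lemma Finset.Shatters.exists_signPattern {s : Finset ι} (hs : (signPatterns h).Shatters s)
    (P : ι → Prop) [DecidablePred P] : ∃ x, ∀ k ∈ s, (0 < h k x ↔ P k) := by
  obtain ⟨u, hu, hsu⟩ := hs (filter_subset P s)
  obtain ⟨x, rfl⟩ : ∃ x, signPattern h x = u := by simpa [signPatterns] using hu
  refine ⟨x, fun k hk => ?_⟩
  simpa [signPattern, hk] using congr(k ∈ $hsu)

/-- A nontrivial linear relation `∑ μₖ • (hₖ).linear = 0` among the shattered functionals makes
`∑ μₖ hₖ` constant, which rules out realizing both sign patterns `{μ > 0}` and `{μ < 0}`. -/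
lemma Finset.Shatters.card_le_finrank [FiniteDimensional ℝ V] {s : Finset ι}
    (hs : (signPatterns h).Shatters s) : #s ≤ finrank ℝ V := by
  by_contra! hlt
  have hdep : ¬ LinearIndepOn ℝ (fun k => (h k).linear) (s : Set ι) := fun hli =>
    hlt.not_ge (by simpa [finrank_linearMap_self] using hli.fintype_card_le_finrank)
  obtain ⟨μ, hμ, hμ0⟩ := not_linearIndepOn_finset_iff.1 hdep
  obtain ⟨x, hx⟩ := hs.exists_signPattern h (0 < μ ·)
  obtain ⟨y, hy⟩ := hs.exists_signPattern h (μ · < 0)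
  have hconst : ∑ k ∈ s, μ k * (h k x - h k y) = 0 := by
    have := congr($hμ (x -ᵥ y))
    rw [LinearMap.sum_apply] at this
    simp only [LinearMap.smul_apply, AffineMap.linearMap_vsub, smul_eq_mul] at this
    simpa only [vsub_eq_sub, LinearMap.zero_apply] using this
  exact (sum_mul_sub_pos hμ0 hx hy).ne' hconst

lemma vcDim_signPatterns_le [FiniteDimensional ℝ V] : (signPatterns h).vcDim ≤ finrank ℝ V :=
  Finset.sup_le fun _ hs => (mem_shatterer.1 hs).card_le_finrank h

lemma card_signPatterns_le [FiniteDimensional ℝ V] :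
    #(signPatterns h) ≤ ∑ k ∈ Iic (finrank ℝ V), (Fintype.card ι).choose k :=
  (card_le_card_shatterer _).trans <| card_shatterer_le_sum_vcDim.trans <|
    sum_le_sum_of_subset (Iic_subset_Iic.2 (vcDim_signPatterns_le h))

end SignPattern

lemma sum_choose_le_sq {w : ℕ} (hw : 2 ≤ w) : ∑ k ∈ Iic 2, w.choose k ≤ w ^ 2 := by
  have h3 : 2 * w.choose 2 ≤ w * (w - 1) := Nat.choose_two_right w ▸ Nat.mul_div_le _ _
  rw [show Iic 2 = ({0, 1, 2} : Finset ℕ) by decide, sum_insert (by decide), sum_insert (by decide),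
    sum_singleton, Nat.choose_zero_right, Nat.choose_one_right]
  obtain ⟨m, rfl⟩ := Nat.exists_eq_add_of_le' hw
  rw [show m + 2 - 1 = m + 1 by omega] at h3
  nlinarith

lemma relu_eq_of_mem_signCell {V : Type*} [AddCommGroup V] [Module ℝ V] {m : ℕ}
    (g : V →ᵃ[ℝ] (Fin m → ℝ)) {U : Finset (Fin m)} {x : V}
    (hx : x ∈ signCell (fun j => (LinearMap.proj j).toAffineMap.comp g) U) :
    relu (g x) =
      AffineMap.pi (fun j => if j ∈ U then (LinearMap.proj j).toAffineMap.comp g else 0) x := by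
  funext j
  have hj := Set.mem_iInter.1 hx j
  rw [AffineMap.pi_apply, relu]
  split_ifs at hj ⊢
  · exact max_eq_left hj
  · exact max_eq_right hj

section PiecewiseAffine

variable {V W W' : Type*} [AddCommGroup V] [Module ℝ V] [AddCommGroup W] [Module ℝ W]
  [AddCommGroup W'] [Module ℝ W']

def IsPiecewiseAffine (f : V → W) (n : ℕ) : Prop :=
  ∃ N ≤ n, ∃ (C : Fin N → Set V) (g : Fin N → V →ᵃ[ℝ] W),
    (∀ i, Convex ℝ (C i)) ∧ (⋃ i, C i) = Set.univ ∧ ∀ i, ∀ x ∈ C i, f x = g i x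

lemma AffineMap.isPiecewiseAffine (φ : V →ᵃ[ℝ] W) : IsPiecewiseAffine φ 1 :=
  ⟨1, le_rfl, fun _ => Set.univ, fun _ => φ, fun _ => convex_univ, Set.iUnion_const _,
    fun _ _ _ => rfl⟩

namespace IsPiecewiseAffine

variable {f : V → W} {n : ℕ}

lemma of_fintype {ι : Type*} [Fintype ι] (C : ι → Set V) (g : ι → V →ᵃ[ℝ] W)
    (hcard : Fintype.card ι ≤ n) (hconv : ∀ i, Convex ℝ (C i)) (hcover : (⋃ i, C i) = Set.univ)
    (hf : ∀ i, ∀ x ∈ C i, f x = g i x) : IsPiecewiseAffine f n :=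
  let e := (Fintype.equivFin ι).symm
  ⟨_, hcard, C ∘ e, g ∘ e, fun _ => hconv _, (e.surjective.iUnion_comp C).trans hcover,
    fun _ => hf _⟩

lemma mono {m : ℕ} (hf : IsPiecewiseAffine f n) (hnm : n ≤ m) : IsPiecewiseAffine f m :=
  let ⟨N, hN, rest⟩ := hf
  ⟨N, hN.trans hnm, rest⟩

lemma affineMap_comp (φ : W →ᵃ[ℝ] W') (hf : IsPiecewiseAffine f n) :
    IsPiecewiseAffine (φ ∘ f) n :=
  let ⟨N, hN, C, g, hconv, hcover, hfg⟩ := hf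
  ⟨N, hN, C, fun i => φ.comp (g i), hconv, hcover, fun i x hx => by simp [hfg i x hx]⟩

lemma relu_comp [FiniteDimensional ℝ V] {m : ℕ} {f : V → Fin m → ℝ}
    (hf : IsPiecewiseAffine f n) :
    IsPiecewiseAffine (relu ∘ f) (n * ∑ k ∈ Iic (finrank ℝ V), m.choose k) := by
  obtain ⟨N, hN, C, g, hconv, hcover, hfg⟩ := hf
  let h (i : Fin N) (j : Fin m) : V →ᵃ[ℝ] ℝ := (LinearMap.proj j).toAffineMap.comp (g i)
  refine of_fintype (ι := Σ i, signPatterns (h i)) (fun p => C p.1 ∩ signCell (h p.1) p.2)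
    (fun p => AffineMap.pi fun j => if j ∈ p.2.1 then h p.1 j else 0) ?_
    (fun p => (hconv _).inter (convex_signCell _ _)) ?_ ?_
  · rw [Fintype.card_sigma]
    calc ∑ i, Fintype.card (signPatterns (h i))
        _ ≤ ∑ _i : Fin N, ∑ k ∈ Iic (finrank ℝ V), m.choose k :=
          sum_le_sum fun i _ => by simpa using card_signPatterns_le (h i)
        _ ≤ n * ∑ k ∈ Iic (finrank ℝ V), m.choose k := by
          simpa using Nat.mul_le_mul_right _ hN
  · refine Set.eq_univ_of_forall fun x => ?_
    obtain ⟨i, hi⟩ := Set.mem_iUnion.1 (hcover ▸ Set.mem_univ x)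
    exact Set.mem_iUnion.2 ⟨⟨i, signPattern (h i) x, signPattern_mem_signPatterns _ x⟩,
      hi, mem_signCell_signPattern _ x⟩
  · rintro p x ⟨hxC, hxU⟩
    rw [Function.comp_apply, hfg p.1 x hxC]
    exact relu_eq_of_mem_signCell (g p.1) hxU

lemma relu_comp_of_finrank_eq_two [FiniteDimensional ℝ V] (hV : finrank ℝ V = 2) {w : ℕ}
    (hw : 2 ≤ w) {f : V → Fin w → ℝ} (hf : IsPiecewiseAffine f n) :
    IsPiecewiseAffine (relu ∘ f) (n * w ^ 2) :=
  hf.relu_comp.mono (Nat.mul_le_mul_left _ (hV ▸ sum_choose_le_sq hw))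

end IsPiecewiseAffine

end PiecewiseAffine

noncomputable def affineLayer {m n : ℕ} (M : Matrix (Fin m) (Fin n) ℝ) (c : Fin m → ℝ) :
    (Fin n → ℝ) →ᵃ[ℝ] (Fin m → ℝ) :=
  M.mulVecLin.toAffineMap + AffineMap.const ℝ _ c

section Layers

variable {w : ℕ} (A1 : Matrix (Fin w) (Fin 2) ℝ) (b1 : Fin w → ℝ) (A : ℕ → Matrix (Fin w) (Fin w) ℝ)
  (b : ℕ → Fin w → ℝ)

lemma mlpHidden_zero : mlpHidden A1 b1 A b 0 = relu ∘ affineLayer A1 b1 := by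
  funext x
  simp [mlpHidden, affineLayer]

lemma mlpHidden_succ (k : ℕ) :
    mlpHidden A1 b1 A b (k + 1) = relu ∘ affineLayer (A k) (b k) ∘ mlpHidden A1 b1 A b k := by
  funext x
  simp [mlpHidden, affineLayer]

lemma isPiecewiseAffine_mlpHidden (hw : 2 ≤ w) (k : ℕ) :
    IsPiecewiseAffine (mlpHidden A1 b1 A b k) (w ^ (2 * (k + 1))) := by
  have hrelu {f : (Fin 2 → ℝ) → Fin w → ℝ} {n : ℕ} (hf : IsPiecewiseAffine f n) :=
    hf.relu_comp_of_finrank_eq_two (finrank_fin_fun ℝ) hw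
  induction k with
  | zero => simpa [mlpHidden_zero] using hrelu (affineLayer A1 b1).isPiecewiseAffine
  | succ k ih =>
    rw [mlpHidden_succ, show 2 * (k + 1 + 1) = 2 * (k + 1) + 2 by ring, pow_add]
    exact hrelu (ih.affineMap_comp (affineLayer (A k) (b k)))

end Layers

/-- Every ReLU MLP of depth `d ≥ 1` and width `w ≥ 2` on `ℝ²` is piecewise affine
with at most `w^(2d)` pieces. -/
theorem mlp_pieces_upper_bound (d w : ℕ) (hd : 1 ≤ d) (hw : 2 ≤ w)
    (F : (Fin 2 → ℝ) → ℝ) (hF : IsReluMLP d w F) :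
    ∃ (N : ℕ), N ≤ w ^ (2 * d) ∧
      ∃ (C : Fin N → Set (Fin 2 → ℝ)) (g : Fin N → ((Fin 2 → ℝ) →ᵃ[ℝ] ℝ)),
        (∀ i, Convex ℝ (C i)) ∧ (⋃ i, C i) = Set.univ ∧
        ∀ i, ∀ x ∈ C i, F x = g i x := by
  obtain ⟨A1, b1, A, b, v, c, hF⟩ := hF
  let readout : (Fin w → ℝ) →ᵃ[ℝ] ℝ :=
    (dotProductEquiv ℝ (Fin w) v).toAffineMap + AffineMap.const ℝ _ c
  have hpieces := (isPiecewiseAffine_mlpHidden A1 b1 A b hw (d - 1)).affineMap_comp readout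
  rw [Nat.sub_add_cancel hd] at hpieces
  obtain ⟨N, hN, C, g, hconv, hcover, hg⟩ := hpieces
  refine ⟨N, hN, C, g, hconv, hcover, fun i x hx => ?_⟩
  rw [hF x, ← hg i x hx]
  simp [readout, dotProduct]
end

section
/- If a ReLU MLP of depth d ≥ 1 and width w ≥ 2 correctly classifies f_m, then w^(2d) ≥ 2^m. -/
open Real

/-!
A ReLU network is affine on each activation region, the set of inputs with a given sign pattern
of all pre-activations. Inductively over the layers, each region is convex and the next `w`
pre-activations are affine on it, and `w` affine functions realise at most `(w² + w + 2) / 2 ≤ w²`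
sign patterns on a convex subset of the plane (cut by one line at a time; the new patterns are
those of the other functions on that line). So `F` is affine on each of at most `w^(2d)` pieces.

Along the normal segment through the midpoint of an edge of `P_m`, `F` goes from positive (inside)
to nonpositive (outside); since the segment is connected and `F` is continuous, the affine function
of some piece changes sign on it, so it nearly vanishes at the midpoint compared to its slope.
Three edge midpoints span a triangle whose area is bounded below, so no nonconstant affine
function nearly vanishes at three of them. Each piece thus serves at most two of the `2^(m+1)`
edges, and there are at least `2^m` pieces.
-/

open Set
open scoped Matrix

namespace WidthDepth

noncomputable section

theorem ncard_le_mul_ncard_image {α β : Type*} {X : Set α} (hX : X.Finite) (f : α → β) {n : ℕ}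
    (hn : ∀ b ∈ f '' X, {a ∈ X | f a = b}.ncard ≤ n) : X.ncard ≤ n * (f '' X).ncard := by
  classical
  rw [ncard_eq_toFinset_card X hX, ncard_eq_toFinset_card _ (hX.image f),
    Finite.toFinset_image f hX (hX.image f)]
  refine Finset.card_le_mul_card_image _ n fun b hb => ?_
  have hb' : b ∈ f '' X := by simpa using hb
  convert hn b hb'
  rw [ncard_eq_toFinset_card _ (hX.subset (sep_subset _ _))]
  congr 1
  ext
  simp

theorem ncard_le_ncard_image_tail_add {n : ℕ} (X : Set (Fin (n + 1) → Bool)) :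
    X.ncard ≤ (Fin.tail '' X).ncard +
      {l | (Fin.cons true l : Fin (n + 1) → Bool) ∈ X ∧ Fin.cons false l ∈ X}.ncard := by
  let cons : Bool → (Fin n → Bool) → Fin (n + 1) → Bool := fun β l => Fin.cons β l
  set A : Set (Fin n → Bool) := {l | cons true l ∈ X}
  set B : Set (Fin n → Bool) := {l | cons false l ∈ X}
  have hX : X ⊆ cons true '' A ∪ cons false '' B := by
    intro p hp
    obtain ⟨β, l, rfl⟩ : ∃ β l, p = cons β l := ⟨p 0, Fin.tail p, (Fin.cons_self_tail p).symm⟩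
    cases β
    · exact Or.inr ⟨l, hp, rfl⟩
    · exact Or.inl ⟨l, hp, rfl⟩
  have hAB : A ∪ B ⊆ Fin.tail '' X := by
    rintro l (hl | hl) <;> exact ⟨_, hl, Fin.tail_cons _ _⟩
  calc X.ncard ≤ (cons true '' A ∪ cons false '' B).ncard := ncard_le_ncard hX
    _ ≤ (cons true '' A).ncard + (cons false '' B).ncard := ncard_union_le _ _
    _ ≤ A.ncard + B.ncard := add_le_add ncard_image_le ncard_image_le
    _ = (A ∪ B).ncard + (A ∩ B).ncard := (ncard_union_add_ncard_inter _ _).symm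
    _ ≤ (Fin.tail '' X).ncard + (A ∩ B).ncard := by grw [ncard_le_ncard hAB]

theorem apply_eq_dotProduct_add {n : ℕ} (G : (Fin n → ℝ) →ᵃ[ℝ] ℝ) (x : Fin n → ℝ) :
    G x = (fun i => G.linear (Pi.single i 1)) ⬝ᵥ x + G 0 := by
  have h : G x - G 0 = G.linear x := by simpa using (G.linearMap_vsub x 0).symm
  rw [← sub_eq_iff_eq_add, h]
  conv_lhs => rw [pi_eq_sum_univ' x]
  simp [dotProduct, mul_comm]

theorem subsingleton_setOf_eq_zero {h : ℝ →ᵃ[ℝ] ℝ} {x y : ℝ} (hxy : h x ≠ h y) :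
    {t | h t = 0}.Subsingleton := by
  have hlin : ∀ s t, h s - h t = (s - t) * h.linear 1 := fun s t => by
    rw [← vsub_eq_sub, ← h.linearMap_vsub, vsub_eq_sub, ← smul_eq_mul, ← h.linear.map_smul,
      smul_eq_mul, mul_one]
  intro s hs t ht
  by_contra hst
  have : h.linear 1 = 0 := by
    have := hlin s t
    rw [hs.out, ht.out, sub_self, eq_comm, mul_eq_zero] at this
    exact this.resolve_left (sub_ne_zero.2 hst)
  exact hxy (sub_eq_zero.1 (by rw [hlin, this, mul_zero]))

theorem exists_smul_eq_of_dotProduct_eq_zero {a y : Fin 2 → ℝ} (ha : a ≠ 0) (hy : a ⬝ᵥ y = 0) :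
    ∃ t : ℝ, t • ![-a 1, a 0] = y := by
  have hpos : 0 < a 0 ^ 2 + a 1 ^ 2 := by
    by_contra! h
    exact ha (funext fun i => by
      fin_cases i <;> simp <;> nlinarith [sq_nonneg (a 0), sq_nonneg (a 1)])
  simp only [dotProduct, Fin.sum_univ_two] at hy
  refine ⟨(a 0 * y 1 - a 1 * y 0) / (a 0 ^ 2 + a 1 ^ 2), funext fun i => ?_⟩
  fin_cases i <;> simp <;> field_simp
  · linear_combination (-a 0) * hy
  · linear_combination (-a 1) * hy

theorem exists_setOf_eq_zero_subset_range {h : (Fin 2 → ℝ) →ᵃ[ℝ] ℝ} {x y z : Fin 2 → ℝ}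
    (hxy : h x ≠ h y) (hz : h z = 0) :
    ∃ φ : ℝ →ᵃ[ℝ] (Fin 2 → ℝ), {p | h p = 0} ⊆ range φ := by
  set a : Fin 2 → ℝ := fun i => h.linear (Pi.single i 1)
  have ha : a ≠ 0 := by
    intro ha
    apply hxy
    rw [apply_eq_dotProduct_add h x, apply_eq_dotProduct_add h y]
    change a ⬝ᵥ x + h 0 = a ⬝ᵥ y + h 0
    rw [ha, zero_dotProduct, zero_dotProduct]
  refine ⟨AffineMap.lineMap z (z + ![-a 1, a 0]), fun p hp => ?_⟩
  have hpz : a ⬝ᵥ (p - z) = 0 := by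
    rw [dotProduct_sub]
    have hp' := hp.out
    rw [apply_eq_dotProduct_add h] at hp' hz
    linarith
  obtain ⟨t, ht⟩ := exists_smul_eq_of_dotProduct_eq_zero ha hpz
  exact ⟨t, by rw [AffineMap.lineMap_apply_module', add_sub_cancel_left, ht, sub_add_cancel]⟩

/- `{x | 0 < φ x}` is the union of the closures of the (finitely many) pieces on which `ψ` is
positive, hence clopen. -/
theorem exists_sign_change_of_eq_piece {X ι : Type*} [TopologicalSpace X] [PreconnectedSpace X]
    {φ : X → ℝ} (hφ : Continuous φ) {piece : X → ι} (hpiece : (range piece).Finite)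
    {ψ : ι → X → ℝ} (hψ : ∀ i, Continuous (ψ i)) (hφψ : ∀ x, φ x = ψ (piece x) x) {x₀ x₁ : X}
    (h₀ : 0 < φ x₀) (h₁ : φ x₁ ≤ 0) : ∃ x y, 0 < ψ (piece x) x ∧ ψ (piece x) y ≤ 0 := by
  by_contra! h
  set S := {x | 0 < φ x}
  have hS : S = ⋃ i ∈ piece '' S, closure (piece ⁻¹' {i}) := by
    refine subset_antisymm (fun x hx => mem_biUnion (mem_image_of_mem piece hx)
      (subset_closure (show x ∈ piece ⁻¹' {piece x} from mem_singleton _))) ?_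
    simp only [iUnion_subset_iff, forall_mem_image]
    intro x hx y hy
    have hEq : EqOn φ (ψ (piece x)) (piece ⁻¹' {piece x}) :=
      fun z hz => (hφψ z).trans (by rw [hz])
    show 0 < φ y
    rw [hEq.closure hφ (hψ _) hy]
    exact h x y (hφψ x ▸ hx)
  have hclopen : IsClopen S := by
    refine ⟨?_, isOpen_lt continuous_const hφ⟩
    rw [hS]
    exact (hpiece.subset (image_subset_range _ _)).isClosed_biUnion fun _ _ => isClosed_closure
  rcases isClopen_iff.1 hclopen with hempty | huniv
  · exact (hempty ▸ h₀ : x₀ ∈ (∅ : Set X))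
  · exact not_lt.2 h₁ (huniv ▸ mem_univ x₁ : x₁ ∈ S)

theorem abs_le_abs_of_sign_change {a b s t : ℝ} (hs : |s| ≤ 1) (ht : |t| ≤ 1)
    (h₀ : 0 < a + b * s) (h₁ : a + b * t ≤ 0) : |a| ≤ |b| := by
  have hbs : |b * s| ≤ |b| := by rw [abs_mul]; exact mul_le_of_le_one_right (abs_nonneg b) hs
  have hbt : |b * t| ≤ |b| := by rw [abs_mul]; exact mul_le_of_le_one_right (abs_nonneg b) ht
  rw [abs_le] at hbs hbt ⊢
  constructor <;> linarith [hbs.1, hbt.2]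

section SignPatterns

def signs {n : ℕ} (z : Fin n → ℝ) : Fin n → Bool := fun j => decide (0 ≤ z j)

theorem convex_setOf_signs_eq {n : ℕ} (s : Fin n → Bool) :
    Convex ℝ {z : Fin n → ℝ | signs z = s} := by
  have : {z : Fin n → ℝ | signs z = s} =
      ⋂ j, if s j then {z | 0 ≤ z j} else {z | z j < 0} := by
    ext z
    simp only [mem_iInter, funext_iff, signs]
    refine forall_congr' fun j => ?_
    cases s j <;> simp
  rw [this]
  refine convex_iInter fun j => ?_
  split_ifs
  · exact convex_halfSpace_ge (LinearMap.proj j).isLinear 0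
  · exact convex_halfSpace_lt (LinearMap.proj j).isLinear 0

theorem signs_eq_cons_iff {n : ℕ} {z : Fin (n + 1) → ℝ} {β : Bool} {l : Fin n → Bool} :
    signs z = Fin.cons β l ↔ decide (0 ≤ z 0) = β ∧ signs (Fin.tail z) = l := by
  rw [← Fin.cons_self_tail (signs z), Fin.cons_inj]
  rfl

variable {E F : Type*} [AddCommGroup E] [Module ℝ E] [AddCommGroup F] [Module ℝ F]

def signPatterns {n : ℕ} (g : E →ᵃ[ℝ] (Fin n → ℝ)) (S : Set E) : Set (Fin n → Bool) :=
  (fun x => signs (g x)) '' S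

def affineTail {n : ℕ} (g : E →ᵃ[ℝ] (Fin (n + 1) → ℝ)) : E →ᵃ[ℝ] (Fin n → ℝ) :=
  (LinearMap.funLeft ℝ ℝ Fin.succ).toAffineMap.comp g

@[simp] theorem affineTail_apply {n : ℕ} (g : E →ᵃ[ℝ] (Fin (n + 1) → ℝ)) (x : E) :
    affineTail g x = Fin.tail (g x) := rfl

def splitPatterns {n : ℕ} (g : E →ᵃ[ℝ] (Fin (n + 1) → ℝ)) (S : Set E) : Set (Fin n → Bool) :=
  {l | Fin.cons true l ∈ signPatterns g S ∧ Fin.cons false l ∈ signPatterns g S}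

theorem signPatterns_eq_comp {n : ℕ} (g : E →ᵃ[ℝ] (Fin n → ℝ)) {φ : F →ᵃ[ℝ] E} {S : Set E}
    (hS : S ⊆ range φ) : signPatterns g S = signPatterns (g.comp φ) (φ ⁻¹' S) := by
  conv_lhs => rw [signPatterns, ← image_preimage_eq_of_subset hS, image_image]
  rfl

theorem ncard_signPatterns_le {n : ℕ} (g : E →ᵃ[ℝ] (Fin (n + 1) → ℝ)) (S : Set E) :
    (signPatterns g S).ncard ≤
      (signPatterns (affineTail g) S).ncard + (splitPatterns g S).ncard := by
  have : Fin.tail '' signPatterns g S = signPatterns (affineTail g) S := by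
    rw [signPatterns, image_image]
    rfl
  exact this ▸ ncard_le_ncard_image_tail_add _

theorem exists_ne_of_mem_splitPatterns {n : ℕ} {g : E →ᵃ[ℝ] (Fin (n + 1) → ℝ)} {S : Set E}
    {l : Fin n → Bool} (hl : l ∈ splitPatterns g S) : ∃ x y, g x 0 ≠ g y 0 := by
  obtain ⟨⟨x, -, hx⟩, ⟨y, -, hy⟩⟩ := hl
  rw [signs_eq_cons_iff, decide_eq_true_iff] at hx
  rw [signs_eq_cons_iff, decide_eq_false_iff_not, not_le] at hy
  exact ⟨x, y, (hy.1.trans_le hx.1).ne'⟩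

theorem splitPatterns_subset {n : ℕ} {g : E →ᵃ[ℝ] (Fin (n + 1) → ℝ)} {S : Set E}
    (hS : Convex ℝ S) :
    splitPatterns g S ⊆ signPatterns (affineTail g) (S ∩ {x | g x 0 = 0}) := by
  rintro l ⟨⟨x, hxS, hx⟩, ⟨y, hyS, hy⟩⟩
  rw [signs_eq_cons_iff, decide_eq_true_iff] at hx
  rw [signs_eq_cons_iff, decide_eq_false_iff_not, not_le] at hy
  set θ := g x 0 / (g x 0 - g y 0)
  have hθ : θ * (g x 0 - g y 0) = g x 0 := div_mul_cancel₀ _ (by linarith)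
  have hθI : θ ∈ Icc (0 : ℝ) 1 :=
    ⟨div_nonneg hx.1 (by linarith), (div_le_one (by linarith)).2 (by linarith)⟩
  refine ⟨AffineMap.lineMap x y θ, ⟨hS.lineMap_mem hxS hyS hθI, ?_⟩, ?_⟩
  · show g _ 0 = 0
    rw [AffineMap.apply_lineMap, AffineMap.lineMap_apply_module']
    simp only [Pi.add_apply, Pi.smul_apply, Pi.sub_apply, smul_eq_mul]
    linear_combination -hθ
  · simpa [AffineMap.apply_lineMap] using (convex_setOf_signs_eq l).lineMap_mem hx.2 hy.2 hθI

theorem ncard_signPatterns_real_le :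
    ∀ {n : ℕ} (g : ℝ →ᵃ[ℝ] (Fin n → ℝ)) {S : Set ℝ}, Convex ℝ S →
      (signPatterns g S).ncard ≤ n + 1
  | 0, g, S, _ => ncard_le_one_of_subsingleton _
  | n + 1, g, S, hS => by
    have hsplit : (splitPatterns g S).ncard ≤ 1 := by
      rcases (splitPatterns g S).eq_empty_or_nonempty with h | ⟨l, hl⟩
      · simp [h]
      obtain ⟨x, y, hxy⟩ := exists_ne_of_mem_splitPatterns hl
      have hZ := subsingleton_setOf_eq_zero (h := (AffineMap.proj 0).comp g) hxy
      calc (splitPatterns g S).ncard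
          ≤ (signPatterns (affineTail g) (S ∩ {x | g x 0 = 0})).ncard :=
            ncard_le_ncard (splitPatterns_subset hS)
        _ ≤ 1 := ncard_le_one_iff_subsingleton.2 ((hZ.anti inter_subset_right).image _)
    calc (signPatterns g S).ncard
        ≤ (signPatterns (affineTail g) S).ncard + (splitPatterns g S).ncard :=
          ncard_signPatterns_le g S
      _ ≤ n + 1 + 1 := add_le_add (ncard_signPatterns_real_le _ hS) hsplit

theorem two_mul_ncard_signPatterns_le :
    ∀ {n : ℕ} (g : (Fin 2 → ℝ) →ᵃ[ℝ] (Fin n → ℝ)) {S : Set (Fin 2 → ℝ)}, Convex ℝ S →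
      2 * (signPatterns g S).ncard ≤ n * n + n + 2
  | 0, g, S, _ => by linarith [ncard_le_one_of_subsingleton (signPatterns g S)]
  | n + 1, g, S, hS => by
    have hsplit : (splitPatterns g S).ncard ≤ n + 1 := by
      rcases (splitPatterns g S).eq_empty_or_nonempty with h | ⟨l, hl⟩
      · simp [h]
      obtain ⟨x, y, hxy⟩ := exists_ne_of_mem_splitPatterns hl
      obtain ⟨z, ⟨-, hz⟩, -⟩ := splitPatterns_subset hS hl
      obtain ⟨φ, hφ⟩ : ∃ φ : ℝ →ᵃ[ℝ] (Fin 2 → ℝ), {x | g x 0 = 0} ⊆ range φ :=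
        exists_setOf_eq_zero_subset_range (h := (AffineMap.proj 0).comp g) hxy hz
      have hconv : Convex ℝ (S ∩ {x | g x 0 = 0}) :=
        hS.inter ((convex_singleton 0).affine_preimage ((AffineMap.proj 0).comp g))
      calc (splitPatterns g S).ncard
          ≤ (signPatterns (affineTail g) (S ∩ {x | g x 0 = 0})).ncard :=
            ncard_le_ncard (splitPatterns_subset hS)
        _ = (signPatterns ((affineTail g).comp φ) (φ ⁻¹' (S ∩ {x | g x 0 = 0}))).ncard := by
            rw [signPatterns_eq_comp _ (inter_subset_right.trans hφ)]
        _ ≤ n + 1 := ncard_signPatterns_real_le _ (hconv.affine_preimage φ)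
    have htail := two_mul_ncard_signPatterns_le (affineTail g) hS
    have := ncard_signPatterns_le g S
    nlinarith

end SignPatterns

section Network

def reluMask {n : ℕ} (s : Fin n → Bool) : (Fin n → ℝ) →ₗ[ℝ] Fin n → ℝ :=
  LinearMap.pi fun j => if s j then LinearMap.proj j else 0

theorem relu_eq_reluMask {n : ℕ} (z : Fin n → ℝ) : relu z = reluMask (signs z) z := by
  funext j
  by_cases h : 0 ≤ z j
  · simp [relu, reluMask, signs, h]
  · simp [relu, reluMask, signs, h, (not_le.1 h).le]

theorem relu_eqOn_reluMask {X : Type*} {n : ℕ} {f g : X → Fin n → ℝ} {R : Set X}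
    (h : EqOn f g R) (s : Fin n → Bool) :
    EqOn (fun x => relu (f x)) (fun x => reluMask s (g x)) (R ∩ {x | signs (f x) = s}) :=
  fun x hx => by
    show relu (f x) = reluMask s (g x)
    rw [relu_eq_reluMask, hx.2, h hx.1]

theorem continuous_relu {n : ℕ} : Continuous (relu : (Fin n → ℝ) → Fin n → ℝ) :=
  continuous_pi fun j => (continuous_apply j).max continuous_const

def mulVecAdd {m n : ℕ} (M : Matrix (Fin m) (Fin n) ℝ) (c : Fin m → ℝ) :
    (Fin n → ℝ) →ᵃ[ℝ] (Fin m → ℝ) :=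
  M.mulVecLin.toAffineMap + AffineMap.const ℝ _ c

@[simp] theorem mulVecAdd_apply {m n : ℕ} (M : Matrix (Fin m) (Fin n) ℝ) (c : Fin m → ℝ)
    (x : Fin n → ℝ) : mulVecAdd M c x = M *ᵥ x + c := rfl

variable {w : ℕ} (A1 : Matrix (Fin w) (Fin 2) ℝ) (b1 : Fin w → ℝ)
  (A : ℕ → Matrix (Fin w) (Fin w) ℝ) (b : ℕ → Fin w → ℝ)

def preActivation : ℕ → (Fin 2 → ℝ) → Fin w → ℝ
  | 0, x => A1 *ᵥ x + b1
  | i + 1, x => A i *ᵥ relu (preActivation i x) + b i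

theorem mlpHidden_eq_relu_preActivation (i : ℕ) (x : Fin 2 → ℝ) :
    mlpHidden A1 b1 A b i x = relu (preActivation A1 b1 A b i x) := by
  induction i with
  | zero => rfl
  | succ i ih => rw [mlpHidden, ih]; rfl

theorem continuous_mlpHidden (i : ℕ) : Continuous (mlpHidden A1 b1 A b i) := by
  induction i with
  | zero => exact continuous_relu.comp (by fun_prop)
  | succ i ih =>
    exact continuous_relu.comp ((continuous_const.matrix_mulVec ih).add continuous_const)

def activationPattern (i : ℕ) (x : Fin 2 → ℝ) : Fin i → Fin w → Bool :=
  fun k => signs (preActivation A1 b1 A b k x)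

def activationRegion (i : ℕ) (q : Fin i → Fin w → Bool) : Set (Fin 2 → ℝ) :=
  {x | activationPattern A1 b1 A b i x = q}

theorem activationPattern_succ (i : ℕ) (x : Fin 2 → ℝ) :
    activationPattern A1 b1 A b (i + 1) x =
      Fin.snoc (activationPattern A1 b1 A b i x) (signs (preActivation A1 b1 A b i x)) := by
  funext k
  induction k using Fin.lastCases with
  | last => simp [activationPattern]
  | cast k => simp [activationPattern]

theorem activationRegion_succ (i : ℕ) (q : Fin (i + 1) → Fin w → Bool) :
    activationRegion A1 b1 A b (i + 1) q = activationRegion A1 b1 A b i (Fin.init q) ∩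
      {x | signs (preActivation A1 b1 A b i x) = q (Fin.last i)} := by
  ext x
  simp only [activationRegion, mem_inter_iff, mem_ofPred_eq, activationPattern_succ]
  conv_lhs => rw [← Fin.snoc_init_self q]
  exact Fin.snoc_inj

theorem convex_activationRegion_and_exists_affine_eqOn :
    ∀ (i : ℕ) (q : Fin i → Fin w → Bool), Convex ℝ (activationRegion A1 b1 A b i q) ∧
      ∃ g : (Fin 2 → ℝ) →ᵃ[ℝ] (Fin w → ℝ),
        EqOn (preActivation A1 b1 A b i) g (activationRegion A1 b1 A b i q)
  | 0, q => by
    have : activationRegion A1 b1 A b 0 q = univ :=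
      eq_univ_of_forall fun x => Subsingleton.elim _ _
    exact ⟨this ▸ convex_univ, mulVecAdd A1 b1, fun x _ => rfl⟩
  | i + 1, q => by
    obtain ⟨hconv, g, hg⟩ := convex_activationRegion_and_exists_affine_eqOn i (Fin.init q)
    have hreg : activationRegion A1 b1 A b (i + 1) q =
        activationRegion A1 b1 A b i (Fin.init q) ∩ g ⁻¹' {z | signs z = q (Fin.last i)} := by
      rw [activationRegion_succ]
      ext x
      refine and_congr_right fun hx => ?_
      rw [mem_ofPred_eq, mem_preimage, mem_ofPred_eq, hg hx]
    refine ⟨hreg ▸ hconv.inter ((convex_setOf_signs_eq _).affine_preimage g),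
      (mulVecAdd (A i) (b i)).comp ((reluMask (q (Fin.last i))).toAffineMap.comp g),
      fun x hx => ?_⟩
    rw [activationRegion_succ] at hx
    simp [preActivation, relu_eqOn_reluMask hg _ hx]

theorem ncard_range_activationPattern_le (hw : 2 ≤ w) :
    ∀ i : ℕ, (range (activationPattern A1 b1 A b i)).ncard ≤ (w ^ 2) ^ i
  | 0 => (ncard_le_one_of_subsingleton _).trans_eq (pow_zero _).symm
  | i + 1 => by
    have himage : Fin.init '' range (activationPattern A1 b1 A b (i + 1)) =
        range (activationPattern A1 b1 A b i) := by
      rw [← range_comp]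
      rfl
    have hfibre : ∀ q ∈ Fin.init '' range (activationPattern A1 b1 A b (i + 1)),
        {p ∈ range (activationPattern A1 b1 A b (i + 1)) | Fin.init p = q}.ncard ≤ w ^ 2 := by
      intro q _
      obtain ⟨hconv, g, hg⟩ := convex_activationRegion_and_exists_affine_eqOn A1 b1 A b i q
      have hsub : {p ∈ range (activationPattern A1 b1 A b (i + 1)) | Fin.init p = q} ⊆
          Fin.snoc q '' signPatterns g (activationRegion A1 b1 A b i q) := by
        rintro _ ⟨⟨x, rfl⟩, hx⟩
        rw [activationPattern_succ, Fin.init_snoc] at hx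
        refine ⟨signs (g x), ⟨x, hx, rfl⟩, ?_⟩
        rw [activationPattern_succ, hx, hg hx]
      have h2 := two_mul_ncard_signPatterns_le g hconv
      calc _ ≤ (Fin.snoc q '' signPatterns g (activationRegion A1 b1 A b i q)).ncard :=
            ncard_le_ncard hsub
        _ ≤ (signPatterns g (activationRegion A1 b1 A b i q)).ncard := ncard_image_le
        _ ≤ w ^ 2 := by nlinarith
    calc (range (activationPattern A1 b1 A b (i + 1))).ncard
        ≤ w ^ 2 * (Fin.init '' range (activationPattern A1 b1 A b (i + 1))).ncard :=
          ncard_le_mul_ncard_image (toFinite _) _ hfibre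
      _ ≤ (w ^ 2) ^ (i + 1) := by
          rw [himage, pow_succ' (w ^ 2) i]
          exact Nat.mul_le_mul_left _ (ncard_range_activationPattern_le hw i)

theorem exists_affine_eqOn_output (d : ℕ) (v : Fin w → ℝ) (c : ℝ)
    (q : Fin (d + 1) → Fin w → Bool) :
    ∃ G : (Fin 2 → ℝ) →ᵃ[ℝ] ℝ, EqOn (fun x => v ⬝ᵥ mlpHidden A1 b1 A b d x + c) G
      (activationRegion A1 b1 A b (d + 1) q) := by
  obtain ⟨-, g, hg⟩ := convex_activationRegion_and_exists_affine_eqOn A1 b1 A b d (Fin.init q)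
  refine ⟨((dotProductEquiv ℝ (Fin w) v) ∘ₗ reluMask (q (Fin.last d))).toAffineMap.comp g +
    AffineMap.const ℝ _ c, fun x hx => ?_⟩
  rw [activationRegion_succ] at hx
  simp [mlpHidden_eq_relu_preActivation, relu_eqOn_reluMask hg _ hx]

end Network

theorem _root_.IsReluMLP.continuous {d w : ℕ} {F : (Fin 2 → ℝ) → ℝ} (hF : IsReluMLP d w F) :
    Continuous F := by
  obtain ⟨A1, b1, A, b, v, c, hFeq⟩ := hF
  rw [funext hFeq]
  have := continuous_mlpHidden A1 b1 A b (d - 1)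
  fun_prop

theorem _root_.IsReluMLP.exists_affine_pieces {d w : ℕ} {F : (Fin 2 → ℝ) → ℝ}
    (hF : IsReluMLP (d + 1) w F) (hw : 2 ≤ w) :
    ∃ (piece : (Fin 2 → ℝ) → (Fin (d + 1) → Fin w → Bool))
      (ν : (Fin (d + 1) → Fin w → Bool) → Fin 2 → ℝ) (τ : (Fin (d + 1) → Fin w → Bool) → ℝ),
      (range piece).ncard ≤ (w ^ 2) ^ (d + 1) ∧ ∀ x, F x = ν (piece x) ⬝ᵥ x + τ (piece x) := by
  obtain ⟨A1, b1, A, b, v, c, hFeq⟩ := hF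
  choose G hG using exists_affine_eqOn_output A1 b1 A b d v c
  refine ⟨activationPattern A1 b1 A b (d + 1), fun q i => (G q).linear (Pi.single i 1),
    fun q => G q 0, ncard_range_activationPattern_le A1 b1 A b hw _, fun x => ?_⟩
  rw [← apply_eq_dotProduct_add, hFeq, ← hG _ rfl]
  rfl

section Polygon

def cross (y z : Fin 2 → ℝ) : ℝ := y 0 * z 1 - y 1 * z 0

theorem abs_cross_mul_le {ν y z : Fin 2 → ℝ} {ε ρ : ℝ} (hy : |ν ⬝ᵥ y| ≤ ε) (hz : |ν ⬝ᵥ z| ≤ ε)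
    (hyρ : ∀ i, |y i| ≤ ρ) (hzρ : ∀ i, |z i| ≤ ρ) :
    |cross y z| * (|ν 0| + |ν 1|) ≤ 4 * ε * ρ := by
  have hε : 0 ≤ ε := (abs_nonneg _).trans hy
  have bound : ∀ {a b c d : ℝ}, |a| ≤ ε → |b| ≤ ε → |c| ≤ ρ → |d| ≤ ρ →
      |a * c - b * d| ≤ 2 * ε * ρ := fun {a b c d} ha hb hc hd =>
    calc _ ≤ |a| * |c| + |b| * |d| := by rw [← abs_mul, ← abs_mul]; exact abs_sub _ _
      _ ≤ ε * ρ + ε * ρ := add_le_add (mul_le_mul ha hc (abs_nonneg _) hε)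
          (mul_le_mul hb hd (abs_nonneg _) hε)
      _ = 2 * ε * ρ := by ring
  have h0 : cross y z * ν 0 = (ν ⬝ᵥ y) * z 1 - (ν ⬝ᵥ z) * y 1 := by
    simp only [cross, dotProduct, Fin.sum_univ_two]; ring
  have h1 : cross y z * ν 1 = (ν ⬝ᵥ z) * y 0 - (ν ⬝ᵥ y) * z 0 := by
    simp only [cross, dotProduct, Fin.sum_univ_two]; ring
  calc |cross y z| * (|ν 0| + |ν 1|) = |cross y z * ν 0| + |cross y z * ν 1| := by
        rw [abs_mul, abs_mul]; ring
    _ ≤ 2 * ε * ρ + 2 * ε * ρ := by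
        rw [h0, h1]
        exact add_le_add (bound hy hz (hzρ 1) (hyρ 1)) (bound hz hy (hyρ 0) (hzρ 0))
    _ = 4 * ε * ρ := by ring

theorem cross_sub_sub_circle (α β γ : ℝ) :
    cross (![cos β, sin β] - ![cos α, sin α]) (![cos γ, sin γ] - ![cos α, sin α]) =
      sin (β - α) + sin (γ - β) - sin (γ - α) := by
  simp only [cross, sin_sub, Pi.sub_apply, Matrix.cons_val_zero, Matrix.cons_val_one]
  ring

theorem sin_two_mul_add_sin_two_mul_sub_sin (A B : ℝ) :
    sin (2 * A) + sin (2 * B) - sin (2 * (A + B)) = 4 * sin A * sin B * sin (A + B) := by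
  rw [mul_add, sin_add (2 * A), sin_two_mul, sin_two_mul, cos_two_mul, cos_two_mul, sin_add]
  linear_combination (-4 * sin A * cos A) * sin_sq_add_cos_sq B +
    (-4 * sin B * cos B) * sin_sq_add_cos_sq A

theorem sin_le_sin_of_le_of_le_pi_sub {η x : ℝ} (hη : 0 ≤ η) (hη' : η ≤ π / 2) (h₁ : η ≤ x)
    (h₂ : x ≤ π - η) : sin η ≤ sin x := by
  rcases le_total x (π / 2) with hx | hx
  · exact sin_le_sin_of_le_of_le_pi_div_two (by linarith) hx h₁
  · rw [← sin_pi_sub x]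
    exact sin_le_sin_of_le_of_le_pi_div_two (by linarith) (by linarith) (by linarith)

/- Edge `k` of `P m` is the chord between the vertices at angles `edgeAngle m k ± halfAngle m`;
its midpoint is at distance `cos (halfAngle m)` (the apothem) from the origin. -/
def halfAngle (m : ℕ) : ℝ := π / 2 ^ (m + 1)

def edgeAngle (m k : ℕ) : ℝ := π / 2 + (2 * k + 1) * halfAngle m

def edgeMidpoint (m k : ℕ) : Fin 2 → ℝ := cos (halfAngle m) • polyNormal m k

/- With `r = cos (halfAngle m)` and `s = sin (halfAngle m)`, three edge midpoints span a triangle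
with `|cross| ≥ 4 r² s³`, while an affine function flat at all three forces `|cross| ≤ 16 r δ`;
`δ = r s³ / 8` makes these incompatible, and `δ < r` keeps the inner end of the probing segment
`(r ± δ) • polyNormal m k` inside `P m`. -/
def flatTol (m : ℕ) : ℝ := cos (halfAngle m) * sin (halfAngle m) ^ 3 / 8

def IsFlatAtEdge (m k : ℕ) (ν : Fin 2 → ℝ) (τ : ℝ) : Prop :=
  ν ≠ 0 ∧ |ν ⬝ᵥ edgeMidpoint m k + τ| ≤ (|ν 0| + |ν 1|) * flatTol m

variable {m : ℕ}

theorem polyNormal_eq (m k : ℕ) :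
    polyNormal m k = ![cos (edgeAngle m k), sin (edgeAngle m k)] := by
  simp only [polyNormal, edgeAngle, halfAngle, mul_div_assoc]

theorem two_pow_mul_halfAngle (m : ℕ) : 2 ^ (m + 1) * halfAngle m = π := by
  rw [halfAngle]; field_simp

theorem halfAngle_pos (m : ℕ) : 0 < halfAngle m := by
  rw [halfAngle]; positivity

theorem halfAngle_le (hm : 1 ≤ m) : halfAngle m ≤ π / 4 := by
  rw [halfAngle]
  gcongr
  calc (4 : ℝ) = 2 ^ 2 := by norm_num
    _ ≤ 2 ^ (m + 1) := pow_le_pow_right₀ (by norm_num) (by omega)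

theorem cos_halfAngle_pos (hm : 1 ≤ m) : 0 < cos (halfAngle m) :=
  cos_pos_of_mem_Ioo ⟨by linarith [halfAngle_pos m, pi_pos],
    by linarith [halfAngle_le hm, pi_pos]⟩

theorem sin_halfAngle_pos (hm : 1 ≤ m) : 0 < sin (halfAngle m) :=
  sin_pos_of_pos_of_lt_pi (halfAngle_pos m) (by linarith [halfAngle_le hm, pi_pos])

theorem flatTol_pos (hm : 1 ≤ m) : 0 < flatTol m := by
  have := cos_halfAngle_pos hm
  have := sin_halfAngle_pos hm
  rw [flatTol]; positivity

theorem flatTol_lt (hm : 1 ≤ m) : flatTol m < cos (halfAngle m) := by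
  have hr := cos_halfAngle_pos hm
  have hs3 : sin (halfAngle m) ^ 3 ≤ 1 := pow_le_one₀ (sin_halfAngle_pos hm).le (sin_le_one _)
  rw [flatTol]
  nlinarith

theorem polyNormal_dotProduct_polyNormal (m k k' : ℕ) :
    polyNormal m k ⬝ᵥ polyNormal m k' = cos (edgeAngle m k - edgeAngle m k') := by
  simp [polyNormal_eq, dotProduct, Fin.sum_univ_two, cos_sub]

theorem abs_polyNormal_le (m k : ℕ) (i : Fin 2) : |polyNormal m k i| ≤ 1 := by
  fin_cases i <;> simp [polyNormal_eq, abs_cos_le_one, abs_sin_le_one]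

theorem mem_P_iff {x : Fin 2 → ℝ} :
    x ∈ P m ↔ ∀ k < 2 ^ (m + 1), x ⬝ᵥ polyNormal m k ≤ cos (halfAngle m) := by
  simp [P, dotProduct, Fin.sum_univ_two, halfAngle]

theorem smul_polyNormal_mem_interior_P {ρ : ℝ} (hρ₀ : 0 ≤ ρ) (hρ : ρ < cos (halfAngle m))
    (k : ℕ) : ρ • polyNormal m k ∈ interior (P m) := by
  set U := ⋂ k' ∈ {k' | k' < 2 ^ (m + 1)},
    {x : Fin 2 → ℝ | x ⬝ᵥ polyNormal m k' < cos (halfAngle m)}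
  have hU : IsOpen U :=
    (finite_lt_nat _).isOpen_biInter fun k' _ => isOpen_lt (by fun_prop) continuous_const
  refine interior_maximal (fun x hx => mem_P_iff.2 fun k' hk' => ?_) hU ?_
  · exact (mem_iInter₂.1 hx k' hk').le
  · refine mem_iInter₂.2 fun k' _ => ?_
    show ρ • polyNormal m k ⬝ᵥ polyNormal m k' < _
    rw [smul_dotProduct, polyNormal_dotProduct_polyNormal, smul_eq_mul]
    exact (mul_le_of_le_one_right hρ₀ (cos_le_one _)).trans_lt hρ

theorem smul_polyNormal_notMem_P {ρ : ℝ} (hρ : cos (halfAngle m) < ρ) {k : ℕ}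
    (hk : k < 2 ^ (m + 1)) : ρ • polyNormal m k ∉ P m := fun h => by
  have := mem_P_iff.1 h k hk
  rw [smul_dotProduct, polyNormal_dotProduct_polyNormal, sub_self, cos_zero, smul_eq_mul,
    mul_one] at this
  linarith

theorem abs_edgeMidpoint_sub_apply_le (hm : 1 ≤ m) (k k' : ℕ) (i : Fin 2) :
    |(edgeMidpoint m k - edgeMidpoint m k') i| ≤ 2 * cos (halfAngle m) := by
  have hr := cos_halfAngle_pos hm
  simp only [edgeMidpoint, Pi.sub_apply, Pi.smul_apply, smul_eq_mul, ← mul_sub, abs_mul,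
    abs_of_pos hr]
  have := (abs_sub _ _).trans (add_le_add (abs_polyNormal_le m k i) (abs_polyNormal_le m k' i))
  nlinarith

theorem cross_edgeMidpoint (a b c : ℕ) :
    cross (edgeMidpoint m b - edgeMidpoint m a) (edgeMidpoint m c - edgeMidpoint m a) =
      cos (halfAngle m) ^ 2 * (4 * sin ((b - a) * halfAngle m) * sin ((c - b) * halfAngle m) *
        sin ((b - a) * halfAngle m + (c - b) * halfAngle m)) := by
  have hscale : ∀ (ρ : ℝ) (y z : Fin 2 → ℝ), cross (ρ • y) (ρ • z) = ρ ^ 2 * cross y z :=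
    fun ρ y z => by simp only [cross, Pi.smul_apply, smul_eq_mul]; ring
  rw [edgeMidpoint, edgeMidpoint, edgeMidpoint, ← smul_sub, ← smul_sub, hscale, polyNormal_eq,
    polyNormal_eq, polyNormal_eq, cross_sub_sub_circle, ← sin_two_mul_add_sin_two_mul_sub_sin]
  congr 4 <;> simp only [edgeAngle] <;> ring

theorem le_cross_edgeMidpoint (hm : 1 ≤ m) {a b c : ℕ} (hab : a < b) (hbc : b < c)
    (hc : c < 2 ^ (m + 1)) :
    4 * cos (halfAngle m) ^ 2 * sin (halfAngle m) ^ 3 ≤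
      cross (edgeMidpoint m b - edgeMidpoint m a) (edgeMidpoint m c - edgeMidpoint m a) := by
  rw [cross_edgeMidpoint]
  have hs := sin_halfAngle_pos hm
  have hη := halfAngle_pos m
  have hπ := two_pow_mul_halfAngle m
  set η := halfAngle m
  set s := sin η
  set A := ((b : ℝ) - a) * η
  set B := ((c : ℝ) - b) * η
  have hab' : (1 : ℝ) ≤ b - a := by
    rw [le_sub_iff_add_le']; exact_mod_cast hab
  have hbc' : (1 : ℝ) ≤ c - b := by
    rw [le_sub_iff_add_le']; exact_mod_cast hbc
  have hca : (c : ℝ) - a + 1 ≤ 2 ^ (m + 1) := by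
    have : (c : ℝ) + 1 ≤ 2 ^ (m + 1) := by exact_mod_cast (hc : c + 1 ≤ 2 ^ (m + 1))
    linarith [(Nat.cast_nonneg a : (0 : ℝ) ≤ a)]
  have hAB : A + B + η ≤ π := by
    rw [← hπ]
    nlinarith
  have hsin : ∀ {x}, η ≤ x → x ≤ π - η → s ≤ sin x := fun h₁ h₂ =>
    sin_le_sin_of_le_of_le_pi_sub hη.le (by linarith [halfAngle_le hm, pi_pos]) h₁ h₂
  have hA : s ≤ sin A := hsin (by nlinarith) (by nlinarith)
  have hB : s ≤ sin B := hsin (by nlinarith) (by nlinarith)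
  have hAB' : s ≤ sin (A + B) := hsin (by nlinarith) (by linarith)
  have := mul_le_mul (mul_le_mul hA hB hs.le (hs.le.trans hA)) hAB' hs.le
    (mul_nonneg (hs.le.trans hA) (hs.le.trans hB))
  nlinarith [sq_nonneg (cos η)]

theorem exists_isFlatAtEdge {ι : Type*} (hm : 1 ≤ m) {F : (Fin 2 → ℝ) → ℝ} (hF : Continuous F)
    {piece : (Fin 2 → ℝ) → ι} (hpiece : (range piece).Finite) {ν : ι → Fin 2 → ℝ} {τ : ι → ℝ}
    (hFν : ∀ x, F x = ν (piece x) ⬝ᵥ x + τ (piece x)) (hcls : CorrectlyClassifies m F) {k : ℕ}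
    (hk : k < 2 ^ (m + 1)) : ∃ x, IsFlatAtEdge m k (ν (piece x)) (τ (piece x)) := by
  have hδ := flatTol_pos hm
  have hδr := flatTol_lt hm
  let seg : Icc (-1 : ℝ) 1 → Fin 2 → ℝ :=
    fun t => edgeMidpoint m k + ((t : ℝ) * flatTol m) • polyNormal m k
  have hseg : ∀ t, seg t = (cos (halfAngle m) + t * flatTol m) • polyNormal m k :=
    fun t => (add_smul _ _ _).symm
  have : PreconnectedSpace (Icc (-1 : ℝ) 1) := Subtype.preconnectedSpace isPreconnected_Icc
  have h₀ : 0 < F (seg ⟨-1, by norm_num, by norm_num⟩) :=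
    hcls.1 _ (hseg _ ▸ smul_polyNormal_mem_interior_P (by simp; linarith) (by simp; linarith) k)
  have h₁ : F (seg ⟨1, by norm_num, by norm_num⟩) ≤ 0 :=
    hcls.2 _ (hseg _ ▸ smul_polyNormal_notMem_P (by simp; linarith) hk)
  obtain ⟨t, t', hpos, hneg⟩ := exists_sign_change_of_eq_piece (hF.comp (by fun_prop))
    (hpiece.subset (range_comp_subset_range seg piece)) (ψ := fun p t => ν p ⬝ᵥ seg t + τ p)
    (fun p => by fun_prop) (fun t => hFν (seg t)) h₀ h₁
  refine ⟨seg t, ?_⟩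
  simp only [Function.comp_apply] at hpos hneg
  generalize piece (seg t) = p at hpos hneg ⊢
  have hlin : ∀ u : Icc (-1 : ℝ) 1, ν p ⬝ᵥ seg u + τ p =
      (ν p ⬝ᵥ edgeMidpoint m k + τ p) + (flatTol m * ν p ⬝ᵥ polyNormal m k) * u := fun u => by
    simp only [seg, dotProduct_add, dotProduct_smul, smul_eq_mul]
    ring
  rw [hlin] at hpos hneg
  have habs := abs_le_abs_of_sign_change (abs_le.2 ⟨t.2.1, t.2.2⟩) (abs_le.2 ⟨t'.2.1, t'.2.2⟩)
    hpos hneg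
  refine ⟨fun h => by simp [h] at hpos hneg; linarith, habs.trans ?_⟩
  have hνn : |ν p ⬝ᵥ polyNormal m k| ≤ |ν p 0| + |ν p 1| := by
    simp only [dotProduct, Fin.sum_univ_two]
    refine (abs_add_le _ _).trans (add_le_add ?_ ?_) <;> rw [abs_mul] <;>
      exact mul_le_of_le_one_right (abs_nonneg _) (abs_polyNormal_le m k _)
  rw [abs_mul, abs_of_pos hδ, mul_comm]
  exact mul_le_mul_of_nonneg_right hνn hδ.le

theorem not_isFlatAtEdge_three (hm : 1 ≤ m) {a b c : ℕ} (hab : a < b) (hbc : b < c)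
    (hc : c < 2 ^ (m + 1)) {ν : Fin 2 → ℝ} {τ : ℝ} (ha : IsFlatAtEdge m a ν τ)
    (hb : IsFlatAtEdge m b ν τ) (hc' : IsFlatAtEdge m c ν τ) : False := by
  have hL : 0 < |ν 0| + |ν 1| := by
    have : ν 0 ≠ 0 ∨ ν 1 ≠ 0 := by
      by_contra! h
      exact ha.1 (funext fun i => by fin_cases i <;> simp [h.1, h.2])
    rcases this with h | h
    · linarith [abs_pos.2 h, abs_nonneg (ν 1)]
    · linarith [abs_pos.2 h, abs_nonneg (ν 0)]
  have hdiff : ∀ {u v : Fin 2 → ℝ}, |ν ⬝ᵥ u + τ| ≤ (|ν 0| + |ν 1|) * flatTol m →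
      |ν ⬝ᵥ v + τ| ≤ (|ν 0| + |ν 1|) * flatTol m →
      |ν ⬝ᵥ (u - v)| ≤ 2 * ((|ν 0| + |ν 1|) * flatTol m) := fun hu hv => by
    rw [dotProduct_sub, show ∀ x y : ℝ, x - y = (x + τ) - (y + τ) from fun _ _ => by ring]
    exact (abs_sub _ _).trans (by linarith)
  have hupper := abs_cross_mul_le (hdiff hb.2 ha.2) (hdiff hc'.2 ha.2)
    (abs_edgeMidpoint_sub_apply_le hm b a) (abs_edgeMidpoint_sub_apply_le hm c a)
  have hlower := le_cross_edgeMidpoint hm hab hbc hc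
  have hr := cos_halfAngle_pos hm
  have hs := sin_halfAngle_pos hm
  set X := cross (edgeMidpoint m b - edgeMidpoint m a) (edgeMidpoint m c - edgeMidpoint m a)
  have hX : |X| ≤ 2 * cos (halfAngle m) ^ 2 * sin (halfAngle m) ^ 3 := by
    refine le_of_mul_le_mul_right (hupper.trans_eq ?_) hL
    rw [flatTol]
    ring
  nlinarith [le_abs_self X, mul_pos (pow_pos hr 2) (pow_pos hs 3)]

theorem ncard_setOf_isFlatAtEdge_le_two (hm : 1 ≤ m) (ν : Fin 2 → ℝ) (τ : ℝ) :
    {k | k < 2 ^ (m + 1) ∧ IsFlatAtEdge m k ν τ}.ncard ≤ 2 := by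
  by_contra! h
  have hfin : {k | k < 2 ^ (m + 1) ∧ IsFlatAtEdge m k ν τ}.Finite :=
    (finite_lt_nat _).subset fun k hk => hk.1
  rw [ncard_eq_toFinset_card _ hfin] at h
  obtain ⟨t, hts, ht⟩ := Finset.exists_subset_card_eq h
  let f := t.orderEmbOfFin ht
  have hmem : ∀ i, f i < 2 ^ (m + 1) ∧ IsFlatAtEdge m (f i) ν τ := fun i =>
    hfin.mem_toFinset.1 (hts (t.orderEmbOfFin_mem ht i))
  exact not_isFlatAtEdge_three hm (f.strictMono (by decide : (0 : Fin 3) < 1))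
    (f.strictMono (by decide : (1 : Fin 3) < 2)) (hmem 2).1 (hmem 0).2 (hmem 1).2 (hmem 2).2

theorem two_pow_le_ncard_range {ι : Type*} (hm : 1 ≤ m) {F : (Fin 2 → ℝ) → ℝ}
    (hF : Continuous F) {piece : (Fin 2 → ℝ) → ι} (hpiece : (range piece).Finite)
    {ν : ι → Fin 2 → ℝ} {τ : ι → ℝ} (hFν : ∀ x, F x = ν (piece x) ⬝ᵥ x + τ (piece x))
    (hcls : CorrectlyClassifies m F) : 2 ^ m ≤ (range piece).ncard := by
  have hflat : ∀ k, k < 2 ^ (m + 1) → ∃ x, IsFlatAtEdge m k (ν (piece x)) (τ (piece x)) :=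
    fun k hk => exists_isFlatAtEdge hm hF hpiece hFν hcls hk
  choose! x hx using hflat
  set X : Set ℕ := ↑(Finset.range (2 ^ (m + 1)))
  have hfibre : ∀ q ∈ (piece ∘ x) '' X, {k ∈ X | (piece ∘ x) k = q}.ncard ≤ 2 := by
    rintro _ ⟨k₀, -, rfl⟩
    refine (ncard_le_ncard (fun k hk => ?_) ((finite_lt_nat _).subset fun k hk => hk.1)).trans
      (ncard_setOf_isFlatAtEdge_le_two hm (ν (piece (x k₀))) (τ (piece (x k₀))))
    obtain ⟨hkX, hkq⟩ := hk
    have hk' : k < 2 ^ (m + 1) := Finset.mem_range.1 hkX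
    have hkq' : piece (x k) = piece (x k₀) := hkq
    exact ⟨hk', hkq' ▸ hx k hk'⟩
  have hcount : X.ncard ≤ 2 * ((piece ∘ x) '' X).ncard :=
    ncard_le_mul_ncard_image (Finset.finite_toSet _) _ hfibre
  have hX : X.ncard = 2 ^ (m + 1) := by rw [ncard_coe_finset, Finset.card_range]
  have himage : ((piece ∘ x) '' X).ncard ≤ (range piece).ncard :=
    ncard_le_ncard ((image_subset_range _ _).trans (range_comp_subset_range _ _)) hpiece
  rw [hX] at hcount
  have := pow_succ 2 m
  omega

end Polygon

end

end WidthDepth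

/-- If a ReLU MLP of depth `d ≥ 1` and width `w ≥ 2` correctly classifies `f_m`,
then `w^(2d) ≥ 2^m`. -/
theorem width_depth_tradeoff (m d w : ℕ) (hm : 1 ≤ m) (hd : 1 ≤ d) (hw : 2 ≤ w)
    (F : (Fin 2 → ℝ) → ℝ) (hF : IsReluMLP d w F) (hcls : CorrectlyClassifies m F) :
    2 ^ m ≤ w ^ (2 * d) := by
  obtain ⟨d, rfl⟩ : ∃ d', d = d' + 1 := ⟨d - 1, by omega⟩
  obtain ⟨piece, ν, τ, hcard, hFν⟩ := hF.exists_affine_pieces hw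
  calc 2 ^ m ≤ (Set.range piece).ncard :=
        WidthDepth.two_pow_le_ncard_range hm hF.continuous (Set.toFinite _) hFν hcls
    _ ≤ (w ^ 2) ^ (d + 1) := hcard
    _ = w ^ (2 * (d + 1)) := (pow_mul w 2 _).symm
end

section
/- Let m ≥ 1 and let ε > 0 satisfy (1+ε)·cos(π/2^m) < cos(π/2^(m+1)). Then for any two distinct points p, q ∈ V_ε, the midpoint (p+q)/2 lies in the interior of P_m. -/
open Real

/-- The `j`-th "even" vertex of `P m` (every second vertex as `j` ranges over `j < 2^m`). -/
noncomputable def vertex (m j : ℕ) : Fin 2 → ℝ :=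
  ![Real.cos (π / 2 + 2 * π * (j : ℝ) / (2 : ℝ) ^ m),
    Real.sin (π / 2 + 2 * π * (j : ℝ) / (2 : ℝ) ^ m)]

/-- Every second vertex of `P m`, pushed radially outward by the factor `1 + ε`. -/
noncomputable def Vset (m : ℕ) (ε : ℝ) : Set (Fin 2 → ℝ) :=
  {p | ∃ j < 2 ^ m, p = (1 + ε) • vertex m j}

/-! The inner product of the midpoint of `(1+ε)vᵢ` and `(1+ε)vⱼ` with the edge normal `u_k` is
`(1+ε)/2 · (cos aθ + cos bθ)`, where `θ = π/2^(m+1)` and `a = 4i-2k-1`, `b = 4j-2k-1` are odd.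
An odd multiple of `θ` has cosine at most `cos θ`, and at most `cos 3θ` unless it is `±θ`
modulo `2π`. Since `a - b = 4(i-j)` is divisible by `4` but not by `2^(m+2)`, at most one of
`aθ`, `bθ` is `±θ` modulo `2π`, so the inner product is at most
`(1+ε)/2 · (cos θ + cos 3θ) = (1+ε) cos 2θ cos θ < cos² θ ≤ cos θ`. -/

open Filter Topology

lemma cos_sin_dotProduct_cos_sin (a b : ℝ) : ![cos a, sin a] ⬝ᵥ ![cos b, sin b] = cos (a - b) := by
  simp only [dotProduct, Fin.sum_univ_two, Matrix.cons_val_zero, Matrix.cons_val_one]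
  rw [cos_sub]

lemma vertex_dotProduct_polyNormal (m j k : ℕ) :
    vertex m j ⬝ᵥ polyNormal m k = cos ((4 * j - 2 * k - 1 : ℤ) * (π / 2 ^ (m + 1))) := by
  rw [vertex, polyNormal, cos_sin_dotProduct_cos_sin]
  congr 1
  push_cast
  field_simp
  ring

lemma mem_interior_P_of_dotProduct_lt {m : ℕ} {x : Fin 2 → ℝ}
    (h : ∀ k < 2 ^ (m + 1), x ⬝ᵥ polyNormal m k < cos (π / 2 ^ (m + 1))) :
    x ∈ interior (P m) := by
  have hlt : ∀ k ∈ {k | k < 2 ^ (m + 1)},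
      ∀ᶠ y in 𝓝 x, y ⬝ᵥ polyNormal m k < cos (π / 2 ^ (m + 1)) := fun k hk =>
    (continuous_id.dotProduct continuous_const).continuousAt.eventually_lt continuousAt_const
      (h k hk)
  rw [mem_interior_iff_mem_nhds]
  filter_upwards [(eventually_all_finite (Set.finite_lt_nat _)).2 hlt] with y hy k hk
  simpa [dotProduct, Fin.sum_univ_two] using (hy k hk).le

lemma not_both_modEq_one_or_neg_one {M a b : ℤ} (hM : 4 ∣ M) (hab4 : 4 ∣ a - b)
    (hab : ¬ M ∣ a - b) :
    ¬ ((a ≡ 1 [ZMOD M] ∨ a ≡ -1 [ZMOD M]) ∧ (b ≡ 1 [ZMOD M] ∨ b ≡ -1 [ZMOD M])) := by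
  have h4 : a - b ≡ 0 [ZMOD 4] := Int.modEq_zero_iff_dvd.2 hab4
  rintro ⟨ha | ha, hb | hb⟩
  · exact hab (hb.trans ha.symm).dvd
  · have := ((ha.sub hb).of_dvd hM).symm.trans h4
    exact absurd this (by decide)
  · have := ((ha.sub hb).of_dvd hM).symm.trans h4
    exact absurd this (by decide)
  · exact hab (hb.trans ha.symm).dvd

section
variable {N : ℕ}

lemma exists_abs_sub_two_mul_le (hN : 0 < N) (t : ℤ) : ∃ s : ℤ, |t - 2 * N * s| ≤ N := by
  refine ⟨(t + N) / (2 * N), abs_le.2 ⟨?_, ?_⟩⟩ <;>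
  · have h1 := Int.emod_add_mul_ediv (t + N) (2 * N)
    have h2 := Int.emod_nonneg (t + N) (by positivity : (2 * N : ℤ) ≠ 0)
    have h3 := Int.emod_lt_of_pos (t + N) (by positivity : (0 : ℤ) < 2 * N)
    linarith

lemma cos_int_mul_le_cos_nat_mul (hN : 0 < N) (t : ℤ) (n : ℕ)
    (h : ∀ s : ℤ, n ≤ |t - 2 * N * s|) : cos (t * (π / N)) ≤ cos (n * (π / N)) := by
  obtain ⟨s, hs⟩ := exists_abs_sub_two_mul_le hN t
  have hθ : 0 < π / N := by positivity
  have hperiod : (t : ℝ) * (π / N) = ((t - 2 * N * s : ℤ) : ℝ) * (π / N) + s * (2 * π) := by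
    push_cast; field_simp; ring
  rw [hperiod, cos_add_int_mul_two_pi, ← cos_abs, abs_mul, abs_of_pos hθ, ← Int.cast_abs]
  apply cos_le_cos_of_nonneg_of_le_pi (by positivity)
  · calc ((|t - 2 * N * s| : ℤ) : ℝ) * (π / N) ≤ N * (π / N) := by gcongr; exact_mod_cast hs
      _ = π := by field_simp
  · gcongr; exact_mod_cast h s

lemma cos_odd_mul_le (hN : 0 < N) {t : ℤ} (ht : Odd t) : cos (t * (π / N)) ≤ cos (π / N) := by
  simpa using cos_int_mul_le_cos_nat_mul hN t 1 fun s => by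
    obtain ⟨c, hc⟩ : Odd (t - 2 * N * s) := ht.sub_even ⟨N * s, by ring⟩
    rw [hc]
    exact_mod_cast Int.one_le_abs (by omega)

lemma cos_odd_mul_le_cos_three_mul (hN : 0 < N) {t : ℤ} (ht : Odd t)
    (h₁ : ¬ t ≡ 1 [ZMOD 2 * N]) (h₂ : ¬ t ≡ -1 [ZMOD 2 * N]) :
    cos (t * (π / N)) ≤ cos (3 * (π / N)) := by
  simpa using cos_int_mul_le_cos_nat_mul hN t 3 fun s => by
    have hmod : t ≡ t - 2 * N * s [ZMOD 2 * N] := Int.modEq_iff_dvd.2 ⟨-s, by ring⟩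
    obtain ⟨c, hc⟩ : Odd (t - 2 * N * s) := ht.sub_even ⟨N * s, by ring⟩
    rw [hc] at hmod ⊢
    rw [le_abs]
    rcases (by omega : c = 0 ∨ c = -1 ∨ 1 ≤ c ∨ c ≤ -2) with rfl | rfl | h | h
    · exact absurd hmod h₁
    · exact absurd hmod h₂
    · left; push_cast; omega
    · right; push_cast; omega

lemma cos_add_cos_odd_mul_le (hN : 0 < N) {a b : ℤ} (ha : Odd a) (hb : Odd b)
    (hab : ¬ ((a ≡ 1 [ZMOD 2 * N] ∨ a ≡ -1 [ZMOD 2 * N]) ∧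
      (b ≡ 1 [ZMOD 2 * N] ∨ b ≡ -1 [ZMOD 2 * N]))) :
    cos (a * (π / N)) + cos (b * (π / N)) ≤ 2 * cos (2 * (π / N)) * cos (π / N) := by
  have hsum : cos (3 * (π / N)) + cos (π / N) = 2 * cos (2 * (π / N)) * cos (π / N) := by
    rw [cos_add_cos]; ring_nf
  rw [not_and_or, not_or, not_or] at hab
  rcases hab with ⟨ha₁, ha₂⟩ | ⟨hb₁, hb₂⟩
  · linarith [cos_odd_mul_le_cos_three_mul hN ha ha₁ ha₂, cos_odd_mul_le hN hb]
  · linarith [cos_odd_mul_le hN ha, cos_odd_mul_le_cos_three_mul hN hb hb₁ hb₂]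

end

lemma not_dvd_four_mul_sub {m i j : ℕ} (hi : i < 2 ^ m) (hj : j < 2 ^ m) (hij : i ≠ j) :
    ¬ (2 * 2 ^ (m + 1) : ℤ) ∣ 4 * (i - j) := by
  rw [show (2 * 2 ^ (m + 1) : ℤ) = 4 * 2 ^ m by ring, Int.mul_dvd_mul_iff_left (by norm_num)]
  zify at hi hj
  intro h
  have := Int.eq_zero_of_abs_lt_dvd h (abs_sub_lt_iff.2 ⟨by omega, by omega⟩)
  omega

/-- If `(1+ε)·cos(π/2^m) < cos(π/2^(m+1))`, the midpoint of any two distinct points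
of `V_ε` lies in the interior of `P m`. -/
theorem midpoint_in_interior (m : ℕ) (hm : 1 ≤ m) (ε : ℝ) (hε : 0 < ε)
    (hε2 : (1 + ε) * Real.cos (π / (2 : ℝ) ^ m) < Real.cos (π / (2 : ℝ) ^ (m + 1)))
    (p q : Fin 2 → ℝ) (hp : p ∈ Vset m ε) (hq : q ∈ Vset m ε) (hpq : p ≠ q) :
    (2⁻¹ : ℝ) • (p + q) ∈ interior (P m) := by
  obtain ⟨i, hi, rfl⟩ := hp
  obtain ⟨j, hj, rfl⟩ := hq
  have hθ : 2 * (π / 2 ^ (m + 1)) = π / 2 ^ m := by rw [pow_succ]; field_simp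
  set θ : ℝ := π / 2 ^ (m + 1)
  have hcos : 0 < cos θ := cos_pos_of_mem_Ioo ⟨by linarith [pi_pos, show 0 < θ by positivity], by
    rw [div_lt_div_iff₀ (by positivity) two_pos]
    nlinarith [pi_pos, (pow_le_pow_right₀ one_le_two (by omega : 2 ≤ m + 1) : (2 : ℝ) ^ 2 ≤ _)]⟩
  apply mem_interior_P_of_dotProduct_lt
  intro k _
  have hsum := cos_add_cos_odd_mul_le (N := 2 ^ (m + 1)) (a := 4 * i - 2 * k - 1)
    (b := 4 * j - 2 * k - 1) (by positivity) ⟨2 * i - k - 1, by ring⟩ ⟨2 * j - k - 1, by ring⟩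
    (not_both_modEq_one_or_neg_one ⟨2 ^ m, by push_cast; ring⟩ ⟨i - j, by ring⟩
      (by push_cast; rw [show (4 * i - 2 * k - 1 - (4 * j - 2 * k - 1) : ℤ) = 4 * (i - j) by ring]
          exact not_dvd_four_mul_sub hi hj (by rintro rfl; exact hpq rfl)))
  push_cast at hsum
  calc (2⁻¹ : ℝ) • ((1 + ε) • vertex m i + (1 + ε) • vertex m j) ⬝ᵥ polyNormal m k
      = (1 + ε) / 2 * (cos ((4 * i - 2 * k - 1 : ℤ) * θ) + cos ((4 * j - 2 * k - 1 : ℤ) * θ)) := by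
        simp only [smul_dotProduct, add_dotProduct, vertex_dotProduct_polyNormal, smul_eq_mul]
        ring
    _ ≤ (1 + ε) / 2 * (2 * cos (2 * θ) * cos θ) := by push_cast; gcongr
    _ = (1 + ε) * cos (π / 2 ^ m) * cos θ := by rw [hθ]; ring
    _ < cos θ * cos θ := by gcongr
    _ ≤ cos θ := mul_le_of_le_one_left hcos.le (cos_le_one θ)
end
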